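/- arXiv:1812.06822 — 9 statements merged into one kernel-verified Lean document; each statement's English description precedes it below -/
import Mathlib

section
/- In the subsampled spectral gradient setting, for every iteration k the subsampled function decreases up to the nonmonotonicity term: f_{𝒩ₖ}(x_{k+1}) ≤ f_{𝒩ₖ}(xₖ) − C‖∇f_{𝒩ₖ}(xₖ)‖² + ζₖ, where C = c₁(1 − c₂)/L. -/
open scoped RealInnerProductSpace BigOperators

lemma gradient_avg {n : ℕ} {ι : Type*} (s : Finset ι)
    (f : ι → EuclideanSpace ℝ (Fin n) → ℝ) (hf : ∀ j, ContDiff ℝ 1 (f j))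
    (c : ℝ) (z : EuclideanSpace ℝ (Fin n)) :
    HasGradientAt (fun z => c * ∑ j ∈ s, f j z)
      (c • ∑ j ∈ s, gradient (f j) z) z := by
  have hdiff : ∀ j, DifferentiableAt ℝ (f j) z := fun j =>
    ((hf j).differentiable one_ne_zero).differentiableAt
  have hj : ∀ j ∈ s, HasFDerivAt (f j)
      (InnerProductSpace.toDual ℝ _ (gradient (f j) z)) z := fun j _ =>
    (hdiff j).hasGradientAt.hasFDerivAt
  have hsum := HasFDerivAt.const_mul (HasFDerivAt.sum hj) c
  rw [hasGradientAt_iff_hasFDerivAt, map_smul, map_sum]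
  simpa only [Finset.sum_apply] using hsum

theorem subsampled_armijo_decrease
    (n N : ℕ) (hn : 1 ≤ n) (hN : 1 ≤ N)
    (f : Fin N → EuclideanSpace ℝ (Fin n) → ℝ)
    (L : ℝ) (hL : 0 < L)
    (hfC1 : ∀ j, ContDiff ℝ 1 (f j))
    (hfLip : ∀ j u v, ‖gradient (f j) u - gradient (f j) v‖ ≤ L * ‖u - v‖)
    (fN : EuclideanSpace ℝ (Fin n) → ℝ)
    (hfN : ∀ z, fN z = (1 / (N : ℝ)) * ∑ j, f j z)
    (S : ℕ → Finset (Fin N)) (hS : ∀ k, (S k).Nonempty)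
    (fS : ℕ → EuclideanSpace ℝ (Fin n) → ℝ)
    (hfS : ∀ k z, fS k z = (1 / ((S k).card : ℝ)) * ∑ j ∈ S k, f j z)
    (x : ℕ → EuclideanSpace ℝ (Fin n))
    (α ζ σ : ℕ → ℝ)
    (σm σM : ℝ) (hσm : 0 < σm) (hσm1 : σm < 1) (hσM : 1 < σM)
    (hσ : ∀ k, σ k ∈ Set.Icc σm σM)
    (d : ℕ → EuclideanSpace ℝ (Fin n))
    (hd : ∀ k, d k = -(σ k)⁻¹ • gradient (fS k) (x k))
    (hx : ∀ k, x (k + 1) = x k + α k • d k)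
    (c₁ c₂ : ℝ) (hc₁ : 0 < c₁) (hc₁₂ : c₁ ≤ c₂) (hc₂ : c₂ < 1)
    (hα : ∀ k, 0 < α k) (hζ : ∀ k, 0 ≤ ζ k)
    (hArmijo : ∀ k, fS k (x k + α k • d k) ≤
      fS k (x k) + c₁ * α k * ⟪gradient (fS k) (x k), d k⟫ + ζ k)
    (hWolfe : ∀ k, ⟪gradient (fS k) (x k + α k • d k), d k⟫ ≥
      c₂ * ⟪gradient (fS k) (x k), d k⟫) :
    ∀ k, fS k (x (k + 1)) ≤
      fS k (x k) - c₁ * (1 - c₂) / L * ‖gradient (fS k) (x k)‖ ^ 2 + ζ k := by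
  intro k
  have hcard : (0 : ℝ) < ((S k).card : ℝ) := by
    exact_mod_cast Finset.card_pos.mpr (hS k)
  -- gradient formula for fS k
  have hgrad : ∀ z, gradient (fS k) z
      = (1 / ((S k).card : ℝ)) • ∑ j ∈ S k, gradient (f j) z := by
    intro z
    have h := gradient_avg (S k) f hfC1 (1 / ((S k).card : ℝ)) z
    have heq : fS k = fun z => (1 / ((S k).card : ℝ)) * ∑ j ∈ S k, f j z := by
      funext w; exact hfS k w
    rw [heq]
    exact h.gradient
  -- Lipschitz property of gradient of fS k
  have hLip : ∀ u v, ‖gradient (fS k) u - gradient (fS k) v‖ ≤ L * ‖u - v‖ := by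
    intro u v
    rw [hgrad u, hgrad v, ← smul_sub, ← Finset.sum_sub_distrib]
    rw [norm_smul]
    have h1 : ‖∑ j ∈ S k, (gradient (f j) u - gradient (f j) v)‖
        ≤ ∑ j ∈ S k, (L * ‖u - v‖) := by
      refine (norm_sum_le _ _).trans (Finset.sum_le_sum fun j _ => hfLip j u v)
    rw [Finset.sum_const, nsmul_eq_mul] at h1
    calc ‖(1 / ((S k).card : ℝ))‖ * ‖∑ j ∈ S k, (gradient (f j) u - gradient (f j) v)‖
        ≤ (1 / ((S k).card : ℝ)) * (((S k).card : ℝ) * (L * ‖u - v‖)) := by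
          rw [Real.norm_eq_abs, abs_of_pos (by positivity)]
          exact mul_le_mul_of_nonneg_left h1 (by positivity)
      _ = L * ‖u - v‖ := by field_simp
  set g := gradient (fS k) (x k) with hg
  have hσk := hσ k
  have hσpos : 0 < σ k := lt_of_lt_of_le hσm hσk.1
  have hinner : ⟪g, d k⟫ = -(σ k)⁻¹ * ‖g‖ ^ 2 := by
    rw [hd k, inner_smul_right, real_inner_self_eq_norm_sq]
  rw [hx k]
  by_cases hg0 : g = 0
  · have hd0 : d k = 0 := by rw [hd k, ← hg, hg0, smul_zero]
    have h := hArmijo k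
    rw [← hg, hinner] at h
    rw [hg0] at h ⊢
    simp only [hd0, smul_zero, add_zero, norm_zero] at h ⊢
    nlinarith [h]
  · -- lower bound on step size via Wolfe + Lipschitz
    have hgn : 0 < ‖g‖ := norm_pos_iff.mpr hg0
    have hW := hWolfe k
    have hkey : (1 - c₂) * ((σ k)⁻¹ * ‖g‖ ^ 2)
        ≤ L * α k * ((σ k)⁻¹ ^ 2 * ‖g‖ ^ 2) := by
      have h1 : ⟪gradient (fS k) (x k + α k • d k) - g, d k⟫
          ≥ (c₂ - 1) * ⟪g, d k⟫ := by
        rw [inner_sub_left]; nlinarith [hW]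
      have h2 : ⟪gradient (fS k) (x k + α k • d k) - g, d k⟫
          ≤ L * α k * ‖d k‖ ^ 2 := by
        calc ⟪gradient (fS k) (x k + α k • d k) - g, d k⟫
            ≤ ‖gradient (fS k) (x k + α k • d k) - g‖ * ‖d k‖ :=
              real_inner_le_norm _ _
          _ ≤ (L * ‖x k + α k • d k - x k‖) * ‖d k‖ := by
              exact mul_le_mul_of_nonneg_right (hLip _ _) (norm_nonneg _)
          _ = L * α k * ‖d k‖ ^ 2 := by
              rw [add_sub_cancel_left, norm_smul, Real.norm_eq_abs,
                abs_of_pos (hα k)]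
              ring
      have hdn : ‖d k‖ ^ 2 = (σ k)⁻¹ ^ 2 * ‖g‖ ^ 2 := by
        rw [hd k, norm_smul, Real.norm_eq_abs, abs_neg,
          abs_of_pos (inv_pos.mpr hσpos), mul_pow]
      rw [hinner] at h1
      rw [hdn] at h2
      nlinarith [h1, h2]
    have hαlb : (1 - c₂) / L ≤ α k * (σ k)⁻¹ := by
      have hσinv : 0 < (σ k)⁻¹ := inv_pos.mpr hσpos
      have hg2 : 0 < ‖g‖ ^ 2 := pow_pos hgn 2
      rw [div_le_iff₀ hL]
      nlinarith [hkey, mul_pos hσinv hg2]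
    have hA := hArmijo k
    rw [← hg, hinner] at hA
    have hmul : c₁ * ((1 - c₂) / L) * ‖g‖ ^ 2 ≤ c₁ * (α k * (σ k)⁻¹) * ‖g‖ ^ 2 := by
      apply mul_le_mul_of_nonneg_right _ (sq_nonneg _)
      exact mul_le_mul_of_nonneg_left hαlb (le_of_lt hc₁)
    have hfinal : c₁ * α k * (-(σ k)⁻¹ * ‖g‖ ^ 2)
        ≤ -(c₁ * (1 - c₂) / L * ‖g‖ ^ 2) := by
      have e1 : c₁ * α k * (-(σ k)⁻¹ * ‖g‖ ^ 2)
          = -(c₁ * (α k * (σ k)⁻¹) * ‖g‖ ^ 2) := by ring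
      have e2 : c₁ * (1 - c₂) / L * ‖g‖ ^ 2
          = c₁ * ((1 - c₂) / L) * ‖g‖ ^ 2 := by ring
      rw [e1, e2]; linarith [hmul]
    linarith [hA, hfinal]
end

section
/- In the subsampled spectral gradient setting, for every iteration k the full objective decreases up to error terms: f_𝒩(x_{k+1}) ≤ f_𝒩(xₖ) − C‖∇f_{𝒩ₖ}(xₖ)‖² + ζₖ + 2νₖ, where C = c₁(1 − c₂)/L. -/
open scoped RealInnerProductSpace BigOperators

lemma grad_avg (n : ℕ) (ι : Type*) (s : Finset ι) (f : ι → EuclideanSpace ℝ (Fin n) → ℝ)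
    (hf : ∀ j, ContDiff ℝ 1 (f j)) (c : ℝ) (z : EuclideanSpace ℝ (Fin n)) :
    gradient (fun z => c * ∑ j ∈ s, f j z) z = c • ∑ j ∈ s, gradient (f j) z := by
  unfold gradient
  rw [fderiv_const_mul (by exact DifferentiableAt.fun_sum fun j _ => ((hf j).differentiable one_ne_zero).differentiableAt)]
  rw [fderiv_fun_sum (fun j _ => ((hf j).differentiable one_ne_zero).differentiableAt)]
  simp [map_smul, map_sum]

lemma grad_avg_lip (n : ℕ) (ι : Type*) (s : Finset ι) (hs : s.Nonempty)
    (f : ι → EuclideanSpace ℝ (Fin n) → ℝ)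
    (hf : ∀ j, ContDiff ℝ 1 (f j)) (L : ℝ) (hL : 0 < L)
    (hfLip : ∀ j u v, ‖gradient (f j) u - gradient (f j) v‖ ≤ L * ‖u - v‖)
    (u v : EuclideanSpace ℝ (Fin n)) :
    ‖gradient (fun z => (1 / (s.card : ℝ)) * ∑ j ∈ s, f j z) u -
      gradient (fun z => (1 / (s.card : ℝ)) * ∑ j ∈ s, f j z) v‖ ≤ L * ‖u - v‖ := by
  have hc : (0 : ℝ) < (s.card : ℝ) := by exact_mod_cast Finset.card_pos.2 hs
  rw [grad_avg n ι s f hf _ u, grad_avg n ι s f hf _ v, ← smul_sub, ← Finset.sum_sub_distrib,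
    norm_smul]
  calc ‖(1 / (s.card : ℝ))‖ * ‖∑ j ∈ s, (gradient (f j) u - gradient (f j) v)‖
      ≤ (1 / (s.card : ℝ)) * ∑ j ∈ s, ‖gradient (f j) u - gradient (f j) v‖ := by
        rw [Real.norm_eq_abs, abs_of_pos (by positivity)]
        exact mul_le_mul_of_nonneg_left (norm_sum_le _ _) (by positivity)
    _ ≤ (1 / (s.card : ℝ)) * ∑ j ∈ s, L * ‖u - v‖ := by
        apply mul_le_mul_of_nonneg_left (Finset.sum_le_sum fun j _ => hfLip j u v) (by positivity)
    _ = L * ‖u - v‖ := by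
        rw [Finset.sum_const, nsmul_eq_mul]; field_simp

theorem subsampled_full_objective_decrease
    (n N : ℕ) (hn : 1 ≤ n) (hN : 1 ≤ N)
    (f : Fin N → EuclideanSpace ℝ (Fin n) → ℝ)
    (L : ℝ) (hL : 0 < L)
    (hfC1 : ∀ j, ContDiff ℝ 1 (f j))
    (hfLip : ∀ j u v, ‖gradient (f j) u - gradient (f j) v‖ ≤ L * ‖u - v‖)
    (fN : EuclideanSpace ℝ (Fin n) → ℝ)
    (hfN : ∀ z, fN z = (1 / (N : ℝ)) * ∑ j, f j z)
    (S : ℕ → Finset (Fin N)) (hS : ∀ k, (S k).Nonempty)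
    (fS : ℕ → EuclideanSpace ℝ (Fin n) → ℝ)
    (hfS : ∀ k z, fS k z = (1 / ((S k).card : ℝ)) * ∑ j ∈ S k, f j z)
    (x : ℕ → EuclideanSpace ℝ (Fin n))
    (α ζ σ : ℕ → ℝ)
    (σm σM : ℝ) (hσm : 0 < σm) (hσm1 : σm < 1) (hσM : 1 < σM)
    (hσ : ∀ k, σ k ∈ Set.Icc σm σM)
    (d : ℕ → EuclideanSpace ℝ (Fin n))
    (hd : ∀ k, d k = -(σ k)⁻¹ • gradient (fS k) (x k))
    (hx : ∀ k, x (k + 1) = x k + α k • d k)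
    (c₁ c₂ : ℝ) (hc₁ : 0 < c₁) (hc₁₂ : c₁ ≤ c₂) (hc₂ : c₂ < 1)
    (hα : ∀ k, 0 < α k) (hζ : ∀ k, 0 ≤ ζ k)
    (hArmijo : ∀ k, fS k (x k + α k • d k) ≤
      fS k (x k) + c₁ * α k * ⟪gradient (fS k) (x k), d k⟫ + ζ k)
    (hWolfe : ∀ k, ⟪gradient (fS k) (x k + α k • d k), d k⟫ ≥
      c₂ * ⟪gradient (fS k) (x k), d k⟫)
    (ν : ℕ → ℝ)
    (hν : ∀ k, ν k = max |fS k (x k) - fN (x k)| |fS k (x (k + 1)) - fN (x (k + 1))|) :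
    ∀ k, fN (x (k + 1)) ≤
      fN (x k) - c₁ * (1 - c₂) / L * ‖gradient (fS k) (x k)‖ ^ 2 + ζ k + 2 * ν k := by
  intro k
  have hfSfun : fS k = fun z => (1 / ((S k).card : ℝ)) * ∑ j ∈ S k, f j z :=
    funext (hfS k)
  have hLipS : ∀ u v, ‖gradient (fS k) u - gradient (fS k) v‖ ≤ L * ‖u - v‖ := by
    intro u v
    rw [hfSfun]
    exact grad_avg_lip n (Fin N) (S k) (hS k) f hfC1 L hL hfLip u v
  set g := gradient (fS k) (x k) with hg
  have hck : 0 < σ k := lt_of_lt_of_le hσm (hσ k).1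
  -- ν bounds
  have hν1 : fS k (x k) - fN (x k) ≤ ν k := by
    rw [hν k]; exact le_trans (le_abs_self _) (le_max_left _ _)
  have hν2 : fN (x (k+1)) - fS k (x (k+1)) ≤ ν k := by
    rw [hν k]
    calc fN (x (k+1)) - fS k (x (k+1)) ≤ |fN (x (k+1)) - fS k (x (k+1))| := le_abs_self _
      _ = |fS k (x (k+1)) - fN (x (k+1))| := abs_sub_comm _ _
      _ ≤ _ := le_max_right _ _
  have hνnn : 0 ≤ ν k := by rw [hν k]; positivity
  -- inner product of g with d
  have hgd : ⟪g, d k⟫ = -((σ k)⁻¹ * ‖g‖^2) := by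
    rw [hd k, inner_smul_right, real_inner_self_eq_norm_sq]; ring
  have hx1 : x (k+1) = x k + α k • d k := hx k
  have key : c₁ * (1 - c₂) / L * ‖g‖^2 ≤ c₁ * α k * ((σ k)⁻¹ * ‖g‖^2) := by
    by_cases hg0 : g = 0
    · simp [hg0]
    · -- from Wolfe: (1-c₂) * σ⁻¹ * ‖g‖² ≤ ⟪∇fS(x+αd) - g, d⟫ ≤ L α ‖d‖²
      have hW := hWolfe k
      have hdn : ‖d k‖ = (σ k)⁻¹ * ‖g‖ := by
        rw [hd k, norm_smul, Real.norm_eq_abs, abs_neg, abs_of_pos (inv_pos.2 hck)]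
      have h1 : (1 - c₂) * ((σ k)⁻¹ * ‖g‖^2) ≤
          ⟪gradient (fS k) (x k + α k • d k) - g, d k⟫ := by
        rw [inner_sub_left, hgd]
        nlinarith [hW, hgd]
      have h2 : ⟪gradient (fS k) (x k + α k • d k) - g, d k⟫ ≤
          L * α k * ((σ k)⁻¹ * ‖g‖)^2 := by
        calc ⟪gradient (fS k) (x k + α k • d k) - g, d k⟫
            ≤ ‖gradient (fS k) (x k + α k • d k) - g‖ * ‖d k‖ :=
              real_inner_le_norm _ _
          _ ≤ (L * ‖(x k + α k • d k) - x k‖) * ‖d k‖ :=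
              mul_le_mul_of_nonneg_right (hLipS _ _) (norm_nonneg _)
          _ = L * α k * ((σ k)⁻¹ * ‖g‖)^2 := by
              rw [add_sub_cancel_left, norm_smul, Real.norm_eq_abs,
                abs_of_pos (hα k), hdn]; ring
      have hgn : 0 < ‖g‖ := norm_pos_iff.2 hg0
      have h5 : (1 - c₂) * σ k * ‖g‖^2 ≤ L * α k * ‖g‖^2 := by
        have e1 : (1 - c₂) * ((σ k)⁻¹ * ‖g‖^2) * (σ k * σ k) = (1 - c₂) * σ k * ‖g‖^2 := by
          field_simp
        have e2 : L * α k * ((σ k)⁻¹ * ‖g‖)^2 * (σ k * σ k) = L * α k * ‖g‖^2 := by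
          rw [mul_pow]; field_simp
        calc (1 - c₂) * σ k * ‖g‖^2 = (1 - c₂) * ((σ k)⁻¹ * ‖g‖^2) * (σ k * σ k) := e1.symm
          _ ≤ L * α k * ((σ k)⁻¹ * ‖g‖)^2 * (σ k * σ k) :=
              mul_le_mul_of_nonneg_right (le_trans h1 h2) (by positivity)
          _ = L * α k * ‖g‖^2 := e2
      have hαk : (1 - c₂) * σ k / L ≤ α k := by
        rw [div_le_iff₀ hL]
        exact le_of_mul_le_mul_right (by linarith) (pow_pos hgn 2)
      have hmul : c₁ * ((1 - c₂) * σ k / L) ≤ c₁ * α k :=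
        mul_le_mul_of_nonneg_left hαk hc₁.le
      calc c₁ * (1 - c₂) / L * ‖g‖^2
          = c₁ * ((1 - c₂) * σ k / L) * ((σ k)⁻¹ * ‖g‖^2) := by field_simp
        _ ≤ c₁ * α k * ((σ k)⁻¹ * ‖g‖^2) :=
            mul_le_mul_of_nonneg_right hmul (by positivity)
  have hArm := hArmijo k
  rw [hgd, ← hx1] at hArm
  linarith [hArm, hν1, hν2, key, hνnn]
end

section
/- In the subsampled spectral gradient setting, if f_𝒩 is bounded from below on ℝⁿ, Σ_{k≥0} ζₖ < +∞ and Σ_{k≥0} νₖ < +∞, then the series Σ_{k≥0} ‖∇f_{𝒩ₖ}(xₖ)‖² converges (is finite). -/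
open scoped RealInnerProductSpace BigOperators

open InnerProductSpace in
lemma gradient_const_mul_sum {F : Type*} [NormedAddCommGroup F] [InnerProductSpace ℝ F]
    [CompleteSpace F] {ι : Type*} (s : Finset ι) (g : ι → F → ℝ) (a : ℝ) (u : F)
    (hg : ∀ j, DifferentiableAt ℝ (g j) u) :
    gradient (fun z => a * ∑ j ∈ s, g j z) u = a • ∑ j ∈ s, gradient (g j) u := by
  have h1 : fderiv ℝ (fun z => a * ∑ j ∈ s, g j z) u
      = a • ∑ j ∈ s, fderiv ℝ (g j) u := by
    rw [fderiv_const_mul (by exact DifferentiableAt.fun_sum fun j _ => hg j)]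
    congr 1
    exact fderiv_fun_sum fun j _ => hg j
  simp only [gradient, h1, map_smul, map_sum]

theorem subsampled_gradient_series_summable
    (n N : ℕ) (hn : 1 ≤ n) (hN : 1 ≤ N)
    (f : Fin N → EuclideanSpace ℝ (Fin n) → ℝ)
    (L : ℝ) (hL : 0 < L)
    (hfC1 : ∀ j, ContDiff ℝ 1 (f j))
    (hfLip : ∀ j u v, ‖gradient (f j) u - gradient (f j) v‖ ≤ L * ‖u - v‖)
    (fN : EuclideanSpace ℝ (Fin n) → ℝ)
    (hfN : ∀ z, fN z = (1 / (N : ℝ)) * ∑ j, f j z)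
    (S : ℕ → Finset (Fin N)) (hS : ∀ k, (S k).Nonempty)
    (fS : ℕ → EuclideanSpace ℝ (Fin n) → ℝ)
    (hfS : ∀ k z, fS k z = (1 / ((S k).card : ℝ)) * ∑ j ∈ S k, f j z)
    (x : ℕ → EuclideanSpace ℝ (Fin n))
    (α ζ σ : ℕ → ℝ)
    (σm σM : ℝ) (hσm : 0 < σm) (hσm1 : σm < 1) (hσM : 1 < σM)
    (hσ : ∀ k, σ k ∈ Set.Icc σm σM)
    (d : ℕ → EuclideanSpace ℝ (Fin n))
    (hd : ∀ k, d k = -(σ k)⁻¹ • gradient (fS k) (x k))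
    (hx : ∀ k, x (k + 1) = x k + α k • d k)
    (c₁ c₂ : ℝ) (hc₁ : 0 < c₁) (hc₁₂ : c₁ ≤ c₂) (hc₂ : c₂ < 1)
    (hα : ∀ k, 0 < α k) (hζ : ∀ k, 0 ≤ ζ k)
    (hArmijo : ∀ k, fS k (x k + α k • d k) ≤
      fS k (x k) + c₁ * α k * ⟪gradient (fS k) (x k), d k⟫ + ζ k)
    (hWolfe : ∀ k, ⟪gradient (fS k) (x k + α k • d k), d k⟫ ≥
      c₂ * ⟪gradient (fS k) (x k), d k⟫)
    (ν : ℕ → ℝ)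
    (hν : ∀ k, ν k = max |fS k (x k) - fN (x k)| |fS k (x (k + 1)) - fN (x (k + 1))|)
    (hbdd : BddBelow (Set.range fN))
    (hζsum : Summable ζ) (hνsum : Summable ν) :
    Summable (fun k => ‖gradient (fS k) (x k)‖ ^ 2) := by
  set g : ℕ → EuclideanSpace ℝ (Fin n) := fun k => gradient (fS k) (x k) with hg
  -- differentiability of each f j
  have hdiff : ∀ j u, DifferentiableAt ℝ (f j) u := fun j u =>
    ((hfC1 j).differentiable one_ne_zero).differentiableAt
  -- gradient of fS k
  have hgradfS : ∀ k u, gradient (fS k) u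
      = (1 / ((S k).card : ℝ)) • ∑ j ∈ S k, gradient (f j) u := by
    intro k u
    have : fS k = fun z => (1 / ((S k).card : ℝ)) * ∑ j ∈ S k, f j z := funext (hfS k)
    rw [this, gradient_const_mul_sum _ _ _ _ (fun j => hdiff j u)]
  -- Lipschitz gradient of fS k
  have hLipS : ∀ k u v, ‖gradient (fS k) u - gradient (fS k) v‖ ≤ L * ‖u - v‖ := by
    intro k u v
    have hcard : (0 : ℝ) < ((S k).card : ℝ) := by
      exact_mod_cast Finset.card_pos.mpr (hS k)
    rw [hgradfS, hgradfS, ← smul_sub, ← Finset.sum_sub_distrib]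
    rw [norm_smul]
    have h1 : ‖∑ j ∈ S k, (gradient (f j) u - gradient (f j) v)‖
        ≤ ∑ j ∈ S k, ‖gradient (f j) u - gradient (f j) v‖ := norm_sum_le _ _
    have h2 : ∑ j ∈ S k, ‖gradient (f j) u - gradient (f j) v‖
        ≤ ((S k).card : ℝ) * (L * ‖u - v‖) := by
      have := Finset.sum_le_sum (fun j (_ : j ∈ S k) => hfLip j u v)
      rwa [Finset.sum_const, nsmul_eq_mul] at this
    have h3 : ‖(1 / ((S k).card : ℝ))‖ = 1 / ((S k).card : ℝ) := by
      rw [Real.norm_eq_abs, abs_of_pos (by positivity)]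
    rw [h3]
    calc 1 / ((S k).card : ℝ) * ‖∑ j ∈ S k, (gradient (f j) u - gradient (f j) v)‖
        ≤ 1 / ((S k).card : ℝ) * (((S k).card : ℝ) * (L * ‖u - v‖)) := by
          apply mul_le_mul_of_nonneg_left (h1.trans h2) (by positivity)
      _ = L * ‖u - v‖ := by field_simp
  -- key inner product
  have hinner : ∀ k, ⟪g k, d k⟫ = -(σ k)⁻¹ * ‖g k‖ ^ 2 := by
    intro k
    rw [hd k, real_inner_smul_right, real_inner_self_eq_norm_sq]
  have hσpos : ∀ k, 0 < σ k := fun k => lt_of_lt_of_le hσm (hσ k).1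
  set c : ℝ := c₁ * (1 - c₂) / L with hc
  have hcpos : 0 < c := by
    apply div_pos (mul_pos hc₁ (by linarith)) hL
  -- per-step inequality
  have key : ∀ k, c * ‖g k‖ ^ 2 ≤ fN (x k) - fN (x (k + 1)) + ζ k + 2 * ν k := by
    intro k
    have hσk := hσpos k
    have hdk : ‖d k‖ = (σ k)⁻¹ * ‖g k‖ := by
      rw [hd k, norm_smul, Real.norm_eq_abs, abs_neg, abs_of_pos (by positivity)]
    -- Wolfe ⇒ step size lower bound
    have hW := hWolfe k
    have hCS : ⟪gradient (fS k) (x k + α k • d k) - g k, d k⟫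
        ≤ L * α k * ‖d k‖ ^ 2 := by
      calc ⟪gradient (fS k) (x k + α k • d k) - g k, d k⟫
          ≤ ‖gradient (fS k) (x k + α k • d k) - g k‖ * ‖d k‖ :=
            real_inner_le_norm _ _
        _ ≤ (L * ‖(x k + α k • d k) - x k‖) * ‖d k‖ := by
            apply mul_le_mul_of_nonneg_right (hLipS k _ _) (norm_nonneg _)
        _ = L * α k * ‖d k‖ ^ 2 := by
            rw [add_sub_cancel_left, norm_smul, Real.norm_eq_abs,
              abs_of_pos (hα k)]
            ring
    have hsplit : ⟪gradient (fS k) (x k + α k • d k) - g k, d k⟫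
        = ⟪gradient (fS k) (x k + α k • d k), d k⟫ - ⟪g k, d k⟫ :=
      inner_sub_left _ _ _
    have h4 : (1 - c₂) * ((σ k)⁻¹ * ‖g k‖ ^ 2) ≤ L * α k * ‖d k‖ ^ 2 := by
      rw [hsplit, hinner k] at hCS
      nlinarith [hW, hinner k]
    -- rewrite rhs
    have h5 : α k * ((σ k)⁻¹ * ‖g k‖ ^ 2) ≥ ((1 - c₂) / L) * ‖g k‖ ^ 2 := by
      rw [hdk] at h4
      have hσinv : 0 < (σ k)⁻¹ := by positivity
      rw [ge_iff_le, div_mul_eq_mul_div, div_le_iff₀ hL]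
      nlinarith [sq_nonneg (‖g k‖), hσinv, mul_pos hσinv hσinv]
    -- Armijo
    have hA := hArmijo k
    rw [hinner k] at hA
    have h6 : c * ‖g k‖ ^ 2 ≤ c₁ * (α k * ((σ k)⁻¹ * ‖g k‖ ^ 2)) := by
      have h7 := mul_le_mul_of_nonneg_left h5 (le_of_lt hc₁)
      calc c * ‖g k‖ ^ 2 = c₁ * ((1 - c₂) / L * ‖g k‖ ^ 2) := by rw [hc]; ring
        _ ≤ _ := h7
    have hAS : fS k (x k) - fS k (x (k + 1)) ≥ c * ‖g k‖ ^ 2 - ζ k := by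
      rw [hx k]
      have e : c₁ * α k * (-(σ k)⁻¹ * ‖g k‖ ^ 2)
          = -(c₁ * (α k * ((σ k)⁻¹ * ‖g k‖ ^ 2))) := by ring
      rw [e] at hA
      linarith
    -- ν bounds
    have hν1 : |fS k (x k) - fN (x k)| ≤ ν k := by rw [hν k]; exact le_max_left _ _
    have hν2 : |fS k (x (k + 1)) - fN (x (k + 1))| ≤ ν k := by
      rw [hν k]; exact le_max_right _ _
    have hb1 := abs_le.mp hν1
    have hb2 := abs_le.mp hν2
    linarith [hAS, hb1.1, hb1.2, hb2.1, hb2.2, hζ k]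
  have hνnn : ∀ k, 0 ≤ ν k := by
    intro k; rw [hν k]; exact le_trans (abs_nonneg _) (le_max_left _ _)
  obtain ⟨B, hB⟩ := hbdd
  have hBle : ∀ z, B ≤ fN z := fun z => hB (Set.mem_range_self z)
  -- partial sums bounded
  have hbound : ∀ K, ∑ k ∈ Finset.range K, c * ‖g k‖ ^ 2
      ≤ fN (x 0) - B + (∑' k, ζ k) + 2 * (∑' k, ν k) := by
    intro K
    have htel : ∑ k ∈ Finset.range K, (fN (x k) - fN (x (k + 1)))
        = fN (x 0) - fN (x K) := Finset.sum_range_sub' (fun k => fN (x k)) K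
    have h1 : ∑ k ∈ Finset.range K, c * ‖g k‖ ^ 2
        ≤ ∑ k ∈ Finset.range K, (fN (x k) - fN (x (k + 1)) + ζ k + 2 * ν k) :=
      Finset.sum_le_sum fun k _ => key k
    have h2 : ∑ k ∈ Finset.range K, (fN (x k) - fN (x (k + 1)) + ζ k + 2 * ν k)
        = (fN (x 0) - fN (x K)) + (∑ k ∈ Finset.range K, ζ k)
          + 2 * (∑ k ∈ Finset.range K, ν k) := by
      rw [← htel]
      rw [Finset.mul_sum, ← Finset.sum_add_distrib, ← Finset.sum_add_distrib]
    have hζle : ∑ k ∈ Finset.range K, ζ k ≤ ∑' k, ζ k :=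
      Summable.sum_le_tsum _ (fun k _ => hζ k) hζsum
    have hνle : ∑ k ∈ Finset.range K, ν k ≤ ∑' k, ν k :=
      Summable.sum_le_tsum _ (fun k _ => hνnn k) hνsum
    have := hBle (x K)
    linarith [h1, h2.le, h2.ge]
  have hsum : Summable (fun k => c * ‖g k‖ ^ 2) :=
    summable_of_sum_range_le (fun k => by positivity) hbound
  have := hsum.mul_left c⁻¹
  refine this.congr fun k => ?_
  rw [inv_mul_cancel_left₀ (ne_of_gt hcpos)]
end

section
/- (Global convergence.) In the subsampled spectral gradient setting, assume f_𝒩 is bounded from below on ℝⁿ, Σ_{k≥0} ζₖ < +∞, Σ_{k≥0} νₖ < +∞, and ηₖ → 0 as k → +∞. Then lim_{k→+∞} ‖∇f_𝒩(xₖ)‖ = 0. -/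
open scoped RealInnerProductSpace BigOperators

lemma gradient_smul_sum {n : ℕ} {ι : Type*} (s : Finset ι)
    (f : ι → EuclideanSpace ℝ (Fin n) → ℝ)
    (hf : ∀ j ∈ s, Differentiable ℝ (f j)) (m : ℝ) (u : EuclideanSpace ℝ (Fin n)) :
    gradient (fun z => m * ∑ j ∈ s, f j z) u = m • ∑ j ∈ s, gradient (f j) u := by
  have h : HasFDerivAt (fun z => m * ∑ j ∈ s, f j z)
      (m • ∑ j ∈ s, fderiv ℝ (f j) u) u :=
    (HasFDerivAt.fun_sum (fun j hj => ((hf j hj) u).hasFDerivAt)).const_mul m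
  have hg := h.hasGradientAt
  rw [hg.gradient, map_smul, map_sum]
  rfl

set_option maxHeartbeats 1600000 in
theorem subsampled_global_convergence
    (n N : ℕ) (hn : 1 ≤ n) (hN : 1 ≤ N)
    (f : Fin N → EuclideanSpace ℝ (Fin n) → ℝ)
    (L : ℝ) (hL : 0 < L)
    (hfC1 : ∀ j, ContDiff ℝ 1 (f j))
    (hfLip : ∀ j u v, ‖gradient (f j) u - gradient (f j) v‖ ≤ L * ‖u - v‖)
    (fN : EuclideanSpace ℝ (Fin n) → ℝ)
    (hfN : ∀ z, fN z = (1 / (N : ℝ)) * ∑ j, f j z)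
    (S : ℕ → Finset (Fin N)) (hS : ∀ k, (S k).Nonempty)
    (fS : ℕ → EuclideanSpace ℝ (Fin n) → ℝ)
    (hfS : ∀ k z, fS k z = (1 / ((S k).card : ℝ)) * ∑ j ∈ S k, f j z)
    (x : ℕ → EuclideanSpace ℝ (Fin n))
    (α ζ σ : ℕ → ℝ)
    (σm σM : ℝ) (hσm : 0 < σm) (hσm1 : σm < 1) (hσM : 1 < σM)
    (hσ : ∀ k, σ k ∈ Set.Icc σm σM)
    (d : ℕ → EuclideanSpace ℝ (Fin n))
    (hd : ∀ k, d k = -(σ k)⁻¹ • gradient (fS k) (x k))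
    (hx : ∀ k, x (k + 1) = x k + α k • d k)
    (c₁ c₂ : ℝ) (hc₁ : 0 < c₁) (hc₁₂ : c₁ ≤ c₂) (hc₂ : c₂ < 1)
    (hα : ∀ k, 0 < α k) (hζ : ∀ k, 0 ≤ ζ k)
    (hArmijo : ∀ k, fS k (x k + α k • d k) ≤
      fS k (x k) + c₁ * α k * ⟪gradient (fS k) (x k), d k⟫ + ζ k)
    (hWolfe : ∀ k, ⟪gradient (fS k) (x k + α k • d k), d k⟫ ≥
      c₂ * ⟪gradient (fS k) (x k), d k⟫)
    (ν : ℕ → ℝ)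
    (hν : ∀ k, ν k = max |fS k (x k) - fN (x k)| |fS k (x (k + 1)) - fN (x (k + 1))|)
    (η : ℕ → ℝ)
    (hη : ∀ k, η k = max |‖gradient fN (x k)‖ ^ 2 - ‖gradient (fS k) (x k)‖ ^ 2|
      |‖gradient fN (x (k + 1))‖ ^ 2 - ‖gradient (fS k) (x (k + 1))‖ ^ 2|)
    (hbdd : BddBelow (Set.range fN))
    (hζsum : Summable ζ) (hνsum : Summable ν)
    (hηlim : Filter.Tendsto η Filter.atTop (nhds 0)) :
    Filter.Tendsto (fun k => ‖gradient fN (x k)‖) Filter.atTop (nhds 0) := by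
  have hdiff : ∀ j, Differentiable ℝ (f j) := fun j => (hfC1 j).differentiable one_ne_zero
  have hc₂0 : 0 < c₂ := lt_of_lt_of_le hc₁ hc₁₂
  -- gradient formula for fS
  have hgradS : ∀ k u, gradient (fS k) u
      = (1 / ((S k).card : ℝ)) • ∑ j ∈ S k, gradient (f j) u := by
    intro k u
    have h1 : fS k = fun z => (1 / ((S k).card : ℝ)) * ∑ j ∈ S k, f j z :=
      funext (hfS k)
    rw [h1, gradient_smul_sum _ _ (fun j _ => hdiff j)]
  have hcard : ∀ k, (0:ℝ) < ((S k).card : ℝ) := fun k => by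
    exact_mod_cast (hS k).card_pos
  -- Lipschitz property of gradient fS
  have hLipS : ∀ k u v, ‖gradient (fS k) u - gradient (fS k) v‖ ≤ L * ‖u - v‖ := by
    intro k u v
    rw [hgradS, hgradS, ← smul_sub, ← Finset.sum_sub_distrib, norm_smul]
    have h1 : ‖∑ j ∈ S k, (gradient (f j) u - gradient (f j) v)‖
        ≤ ∑ j ∈ S k, ‖gradient (f j) u - gradient (f j) v‖ := norm_sum_le _ _
    have h2 : ∑ j ∈ S k, ‖gradient (f j) u - gradient (f j) v‖
        ≤ ∑ _j ∈ S k, L * ‖u - v‖ := Finset.sum_le_sum (fun j _ => hfLip j u v)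
    have h3 : ∑ _j ∈ S k, L * ‖u - v‖ = ((S k).card : ℝ) * (L * ‖u - v‖) := by
      rw [Finset.sum_const, nsmul_eq_mul]
    have h4 : ‖(1 / ((S k).card : ℝ))‖ = 1 / ((S k).card : ℝ) := by
      have := hcard k
      rw [Real.norm_eq_abs, abs_of_pos (by positivity)]
    rw [h4]
    calc 1 / ((S k).card : ℝ) * ‖∑ j ∈ S k, (gradient (f j) u - gradient (f j) v)‖
        ≤ 1 / ((S k).card : ℝ) * (((S k).card : ℝ) * (L * ‖u - v‖)) := by
          have := (h1.trans (h2.trans_eq h3))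
          exact mul_le_mul_of_nonneg_left this (by positivity)
      _ = L * ‖u - v‖ := by field_simp
  set g : ℕ → EuclideanSpace ℝ (Fin n) := fun k => gradient (fS k) (x k) with hg
  have hinner : ∀ k, ⟪g k, d k⟫ = -((σ k)⁻¹ * ‖g k‖ ^ 2) := by
    intro k
    have hdk : d k = -(σ k)⁻¹ • g k := hd k
    rw [hdk, real_inner_smul_right, real_inner_self_eq_norm_sq]
    ring
  set β : ℝ := c₁ * (1 - c₂) * σm / (L * σM) with hβdef
  have hβ : 0 < β := by
    have : 0 < 1 - c₂ := by linarith
    have : 0 < σM := by linarith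
    positivity
  have hν0 : ∀ k, 0 ≤ ν k := by
    intro k; rw [hν k]; positivity
  -- key descent inequality
  have key : ∀ k, β * ‖g k‖ ^ 2 ≤ fN (x k) - fN (x (k+1)) + (ζ k + 2 * ν k) := by
    intro k
    obtain ⟨hσl, hσu⟩ := hσ k
    have hσpos : 0 < σ k := lt_of_lt_of_le hσm hσl
    have hν1 : fS k (x k) - fN (x k) ≤ ν k := by
      rw [hν k]; exact le_trans (le_abs_self _) (le_max_left _ _)
    have hν2 : fN (x (k+1)) - fS k (x (k+1)) ≤ ν k := by
      rw [hν k]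
      exact le_trans (le_trans (le_abs_self _) (abs_sub_comm _ _).le) (le_max_right _ _)
    by_cases hg0 : g k = 0
    · have hg0' : gradient (fS k) (x k) = 0 := hg0
      have hd0 : d k = 0 := by rw [hd k, hg0', smul_zero]
      have hx1 : x (k+1) = x k := by rw [hx k, hd0, smul_zero, add_zero]
      have h5 := hζ k; have h6 := hν0 k
      rw [hg0, norm_zero, hx1]
      nlinarith
    · have hGpos : 0 < ‖g k‖ := norm_pos_iff.mpr hg0
      have hdk : d k = -(σ k)⁻¹ • g k := hd k
      have hdn : ‖d k‖ = (σ k)⁻¹ * ‖g k‖ := by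
        rw [hdk, norm_smul, Real.norm_eq_abs, abs_neg,
          abs_of_pos (inv_pos.mpr hσpos)]
      have hinnk : ⟪g k, d k⟫ = -((σ k)⁻¹ * ‖g k‖ ^ 2) := hinner k
      have hW : ⟪gradient (fS k) (x k + α k • d k), d k⟫ ≥ c₂ * ⟪g k, d k⟫ :=
        hWolfe k
      rw [hinnk] at hW
      have h1 : (1 - c₂) * ((σ k)⁻¹ * ‖g k‖ ^ 2)
          ≤ ⟪gradient (fS k) (x k + α k • d k) - g k, d k⟫ := by
        rw [inner_sub_left, hinnk]; linarith
      have h2 : ⟪gradient (fS k) (x k + α k • d k) - g k, d k⟫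
          ≤ (L * α k * (σ k)⁻¹) * ((σ k)⁻¹ * ‖g k‖ ^ 2) := by
        calc ⟪gradient (fS k) (x k + α k • d k) - g k, d k⟫
            ≤ ‖gradient (fS k) (x k + α k • d k) - g k‖ * ‖d k‖ :=
              real_inner_le_norm _ _
          _ ≤ (L * ‖(x k + α k • d k) - x k‖) * ‖d k‖ :=
              mul_le_mul_of_nonneg_right (hLipS k _ _) (norm_nonneg _)
          _ = (L * α k * (σ k)⁻¹) * ((σ k)⁻¹ * ‖g k‖ ^ 2) := by
              rw [add_sub_cancel_left, norm_smul, Real.norm_eq_abs,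
                abs_of_pos (hα k), hdn]
              ring
      have hp : 0 < (σ k)⁻¹ * ‖g k‖ ^ 2 := by positivity
      have h3 : 1 - c₂ ≤ L * α k * (σ k)⁻¹ := le_of_mul_le_mul_right (h1.trans h2) hp
      have h4 : (1 - c₂) * σ k ≤ L * α k := by
        have h5 := mul_le_mul_of_nonneg_right h3 hσpos.le
        rwa [mul_assoc, inv_mul_cancel₀ (ne_of_gt hσpos), mul_one] at h5
      have e1 : (1 - c₂) * σm ≤ L * α k := by nlinarith
      have e2 : σM⁻¹ ≤ (σ k)⁻¹ := inv_anti₀ hσpos hσu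
      have hβa : β ≤ c₁ * α k * (σ k)⁻¹ := by
        have hX : (1 - c₂) * σm / L ≤ α k := by
          rw [div_le_iff₀ hL]; linarith
        have hβeq : β = c₁ * ((1 - c₂) * σm / L) * σM⁻¹ := by
          rw [hβdef]; field_simp
        rw [hβeq]
        have hXpos : 0 ≤ (1 - c₂) * σm / L := by
          have h7 : 0 < 1 - c₂ := by linarith
          positivity
        exact mul_le_mul (mul_le_mul_of_nonneg_left hX hc₁.le) e2
          (by positivity) (mul_nonneg hc₁.le (hα k).le)
      have hA : fS k (x k + α k • d k) ≤ fS k (x k) + c₁ * α k * ⟪g k, d k⟫ + ζ k :=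
        hArmijo k
      rw [hinnk] at hA
      have hmul : β * ‖g k‖ ^ 2 ≤ (c₁ * α k * (σ k)⁻¹) * ‖g k‖ ^ 2 :=
        mul_le_mul_of_nonneg_right hβa (by positivity)
      have hx1 : x (k+1) = x k + α k • d k := hx k
      rw [hx1] at hν2 ⊢
      nlinarith [hA, hν1, hν2, hmul]
  -- summability of the descent terms
  have hsum2 : Summable (fun k => ζ k + 2 * ν k) := hζsum.add (hνsum.mul_left 2)
  obtain ⟨B, hB⟩ := hbdd
  have hBle : ∀ z, B ≤ fN z := fun z => hB ⟨z, rfl⟩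
  have hpartial : ∀ K, ∑ k ∈ Finset.range K, β * ‖g k‖ ^ 2
      ≤ fN (x 0) - B + ∑' k, (ζ k + 2 * ν k) := by
    intro K
    have htel : ∑ k ∈ Finset.range K, (fN (x k) - fN (x (k+1))) = fN (x 0) - fN (x K) :=
      Finset.sum_range_sub' (fun k => fN (x k)) K
    calc ∑ k ∈ Finset.range K, β * ‖g k‖ ^ 2
        ≤ ∑ k ∈ Finset.range K, (fN (x k) - fN (x (k+1)) + (ζ k + 2 * ν k)) :=
          Finset.sum_le_sum (fun k _ => key k)
      _ = (fN (x 0) - fN (x K)) + ∑ k ∈ Finset.range K, (ζ k + 2 * ν k) := by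
          rw [Finset.sum_add_distrib, htel]
      _ ≤ fN (x 0) - B + ∑' k, (ζ k + 2 * ν k) := by
          have h1 := hBle (x K)
          have h2 : ∑ k ∈ Finset.range K, (ζ k + 2 * ν k) ≤ ∑' k, (ζ k + 2 * ν k) :=
            Summable.sum_le_tsum _ (fun k _ => by have := hζ k; have := hν0 k; linarith) hsum2
          linarith
  have hsumG : Summable (fun k => β * ‖g k‖ ^ 2) :=
    summable_of_sum_range_le (fun k => by positivity) hpartial
  have hsumG2 : Summable (fun k => ‖g k‖ ^ 2) := by
    have h := hsumG.mul_left β⁻¹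
    have heq : (fun k => β⁻¹ * (β * ‖g k‖ ^ 2)) = fun k => ‖g k‖ ^ 2 := by
      funext k; rw [inv_mul_cancel_left₀ hβ.ne']
    rwa [heq] at h
  have hGtend : Filter.Tendsto (fun k => ‖g k‖ ^ 2) Filter.atTop (nhds 0) :=
    hsumG2.tendsto_atTop_zero
  -- transfer to full gradient via η
  have hsq : ∀ k, ‖gradient fN (x k)‖ ^ 2 ≤ ‖g k‖ ^ 2 + η k := by
    intro k
    have h1 : |‖gradient fN (x k)‖ ^ 2 - ‖g k‖ ^ 2| ≤ η k := by
      rw [hη k]; exact le_max_left _ _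
    have h2 := le_abs_self (‖gradient fN (x k)‖ ^ 2 - ‖g k‖ ^ 2)
    linarith
  have hsqtend : Filter.Tendsto (fun k => ‖gradient fN (x k)‖ ^ 2)
      Filter.atTop (nhds 0) := by
    apply squeeze_zero (fun k => by positivity) hsq
    have := hGtend.add hηlim
    simpa using this
  have heq : (fun k => ‖gradient fN (x k)‖)
      = fun k => Real.sqrt (‖gradient fN (x k)‖ ^ 2) :=
    funext fun k => (Real.sqrt_sq (norm_nonneg _)).symm
  rw [heq]
  have hcont := (Real.continuous_sqrt.tendsto 0).comp hsqtend
  simpa [Function.comp_def, Real.sqrt_zero] using hcont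
end

section
/- (Worst-case iteration complexity.) In the subsampled spectral gradient setting, assume f_𝒩 is bounded from below on ℝⁿ with infimum f_*, Σ_{k≥0} ζₖ = ζ̄ < +∞ and Σ_{k≥0} νₖ = ν̄ < +∞. Then for every ε > 0 there exists an index k ≤ ⌈(f_𝒩(x₀) − f_* + ζ̄ + 2ν̄) C⁻¹ ε⁻²⌉ such that ‖∇f_{𝒩ₖ}(xₖ)‖ ≤ ε, where C = c₁(1 − c₂)/L. -/
open scoped RealInnerProductSpace BigOperators

lemma hasGradientAt_avg {n N : ℕ} (f : Fin N → EuclideanSpace ℝ (Fin n) → ℝ)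
    (hf : ∀ j, Differentiable ℝ (f j)) (s : Finset (Fin N)) (c : ℝ)
    (u : EuclideanSpace ℝ (Fin n)) :
    HasGradientAt (fun z => c * ∑ j ∈ s, f j z) (c • ∑ j ∈ s, gradient (f j) u) u := by
  rw [hasGradientAt_iff_hasFDerivAt]
  have h1 : HasFDerivAt (fun z => ∑ j ∈ s, f j z)
      (∑ j ∈ s, (InnerProductSpace.toDual ℝ _) (gradient (f j) u)) u :=
    HasFDerivAt.fun_sum (fun j _ =>
      hasGradientAt_iff_hasFDerivAt.mp ((hf j).differentiableAt.hasGradientAt))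
  have h2 := h1.const_mul c
  convert h2 using 1
  · rfl
  simp [map_smul, map_sum]

set_option maxHeartbeats 1000000 in
theorem subsampled_iteration_complexity
    (n N : ℕ) (hn : 1 ≤ n) (hN : 1 ≤ N)
    (f : Fin N → EuclideanSpace ℝ (Fin n) → ℝ)
    (L : ℝ) (hL : 0 < L)
    (hfC1 : ∀ j, ContDiff ℝ 1 (f j))
    (hfLip : ∀ j u v, ‖gradient (f j) u - gradient (f j) v‖ ≤ L * ‖u - v‖)
    (fN : EuclideanSpace ℝ (Fin n) → ℝ)
    (hfN : ∀ z, fN z = (1 / (N : ℝ)) * ∑ j, f j z)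
    (S : ℕ → Finset (Fin N)) (hS : ∀ k, (S k).Nonempty)
    (fS : ℕ → EuclideanSpace ℝ (Fin n) → ℝ)
    (hfS : ∀ k z, fS k z = (1 / ((S k).card : ℝ)) * ∑ j ∈ S k, f j z)
    (x : ℕ → EuclideanSpace ℝ (Fin n))
    (α ζ σ : ℕ → ℝ)
    (σm σM : ℝ) (hσm : 0 < σm) (hσm1 : σm < 1) (hσM : 1 < σM)
    (hσ : ∀ k, σ k ∈ Set.Icc σm σM)
    (d : ℕ → EuclideanSpace ℝ (Fin n))
    (hd : ∀ k, d k = -(σ k)⁻¹ • gradient (fS k) (x k))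
    (hx : ∀ k, x (k + 1) = x k + α k • d k)
    (c₁ c₂ : ℝ) (hc₁ : 0 < c₁) (hc₁₂ : c₁ ≤ c₂) (hc₂ : c₂ < 1)
    (hα : ∀ k, 0 < α k) (hζ : ∀ k, 0 ≤ ζ k)
    (hArmijo : ∀ k, fS k (x k + α k • d k) ≤
      fS k (x k) + c₁ * α k * ⟪gradient (fS k) (x k), d k⟫ + ζ k)
    (hWolfe : ∀ k, ⟪gradient (fS k) (x k + α k • d k), d k⟫ ≥
      c₂ * ⟪gradient (fS k) (x k), d k⟫)
    (ν : ℕ → ℝ)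
    (hν : ∀ k, ν k = max |fS k (x k) - fN (x k)| |fS k (x (k + 1)) - fN (x (k + 1))|)
    (fstar : ℝ) (hfstar : IsGLB (Set.range fN) fstar)
    (hζsum : Summable ζ) (hνsum : Summable ν) :
    ∀ ε > (0 : ℝ), ∃ k ≤
      ⌈(fN (x 0) - fstar + (∑' i, ζ i) + 2 * (∑' i, ν i)) *
        (c₁ * (1 - c₂) / L)⁻¹ * ε⁻¹ ^ 2⌉₊,
      ‖gradient (fS k) (x k)‖ ≤ ε := by
  have hdiff : ∀ j, Differentiable ℝ (f j) := fun j => (hfC1 j).differentiable one_ne_zero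
  set C : ℝ := c₁ * (1 - c₂) / L with hCdef
  have hC : 0 < C := by
    apply div_pos _ hL
    exact mul_pos hc₁ (by linarith)
  -- gradient of fS
  have hgradS : ∀ k u, gradient (fS k) u =
      (1 / ((S k).card : ℝ)) • ∑ j ∈ S k, gradient (f j) u := by
    intro k u
    have h := hasGradientAt_avg f hdiff (S k) (1 / ((S k).card : ℝ)) u
    have heq : fS k = fun z => (1 / ((S k).card : ℝ)) * ∑ j ∈ S k, f j z := by
      funext z; exact hfS k z
    rw [heq]
    exact h.gradient
  -- Lipschitz continuity of gradient of fS
  have hLipS : ∀ k u v, ‖gradient (fS k) u - gradient (fS k) v‖ ≤ L * ‖u - v‖ := by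
    intro k u v
    rw [hgradS k u, hgradS k v, ← smul_sub, ← Finset.sum_sub_distrib]
    have hcard : (0 : ℝ) < ((S k).card : ℝ) := by
      exact_mod_cast Finset.card_pos.mpr (hS k)
    rw [norm_smul]
    have h1 : ‖∑ j ∈ S k, (gradient (f j) u - gradient (f j) v)‖ ≤
        ∑ j ∈ S k, ‖gradient (f j) u - gradient (f j) v‖ := norm_sum_le _ _
    have h2 : ∑ j ∈ S k, ‖gradient (f j) u - gradient (f j) v‖ ≤
        ∑ _j ∈ S k, L * ‖u - v‖ := Finset.sum_le_sum (fun j _ => hfLip j u v)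
    rw [Finset.sum_const, nsmul_eq_mul] at h2
    have h3 : ‖(1 / ((S k).card : ℝ))‖ = ((S k).card : ℝ)⁻¹ := by
      rw [Real.norm_eq_abs, abs_of_pos (by positivity), one_div]
    rw [h3]
    calc ((S k).card : ℝ)⁻¹ * ‖∑ j ∈ S k, (gradient (f j) u - gradient (f j) v)‖
        ≤ ((S k).card : ℝ)⁻¹ * (((S k).card : ℝ) * (L * ‖u - v‖)) := by
          apply mul_le_mul_of_nonneg_left (le_trans h1 h2) (by positivity)
      _ = L * ‖u - v‖ := by field_simp
  -- per-step decrease of fS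
  have key : ∀ k, fS k (x (k + 1)) ≤
      fS k (x k) - C * ‖gradient (fS k) (x k)‖ ^ 2 + ζ k := by
    intro k
    set g := gradient (fS k) (x k) with hg
    have hσk0 : 0 < σ k := lt_of_lt_of_le hσm (hσ k).1
    have hgd : ⟪g, d k⟫ = -((σ k)⁻¹ * ‖g‖ ^ 2) := by
      rw [hd k, real_inner_smul_right, real_inner_self_eq_norm_sq]
      ring
    by_cases hgz : g = 0
    · have hA := hArmijo k
      rw [hgd, hgz] at hA
      rw [hx k, hgz]
      simp only [norm_zero] at hA ⊢
      nlinarith [hA]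
    · have hG : 0 < ‖g‖ ^ 2 := pow_pos (norm_pos_iff.mpr hgz) 2
      have hdnorm : ‖d k‖ = (σ k)⁻¹ * ‖g‖ := by
        rw [hd k, norm_smul, Real.norm_eq_abs, abs_neg, abs_inv, abs_of_pos hσk0]
      -- step length lower bound from Wolfe
      have hW := hWolfe k
      have hinner : ⟪gradient (fS k) (x k + α k • d k) - g, d k⟫ ≥
          (c₂ - 1) * ⟪g, d k⟫ := by
        rw [inner_sub_left]; linarith [hW]
      have hcs : ⟪gradient (fS k) (x k + α k • d k) - g, d k⟫ ≤
          ‖gradient (fS k) (x k + α k • d k) - g‖ * ‖d k‖ := real_inner_le_norm _ _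
      have hlip : ‖gradient (fS k) (x k + α k • d k) - g‖ ≤ L * (α k * ‖d k‖) := by
        have := hLipS k (x k + α k • d k) (x k)
        simp only [add_sub_cancel_left] at this
        rw [norm_smul, Real.norm_eq_abs, abs_of_pos (hα k)] at this
        exact this
      have hchain : (1 - c₂) * ((σ k)⁻¹ * ‖g‖ ^ 2) ≤
          L * (α k * ((σ k)⁻¹ * ‖g‖)) * ((σ k)⁻¹ * ‖g‖) := by
        have h1 : (c₂ - 1) * ⟪g, d k⟫ ≤ L * (α k * ‖d k‖) * ‖d k‖ := by
          have hd0 : 0 ≤ ‖d k‖ := norm_nonneg _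
          calc (c₂ - 1) * ⟪g, d k⟫ ≤ ‖gradient (fS k) (x k + α k • d k) - g‖ * ‖d k‖ :=
                le_trans hinner hcs
            _ ≤ L * (α k * ‖d k‖) * ‖d k‖ := mul_le_mul_of_nonneg_right hlip hd0
        rw [hgd, hdnorm] at h1
        nlinarith [h1]
      -- cancel one factor (σ k)⁻¹ * ‖g‖ > 0 twice to get α bound
      have hpos : 0 < (σ k)⁻¹ * ‖g‖ ^ 2 := by positivity
      have hstep : (1 - c₂) ≤ L * α k * (σ k)⁻¹ := by
        have h2 : (1 - c₂) * ((σ k)⁻¹ * ‖g‖ ^ 2) ≤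
            (L * α k * (σ k)⁻¹) * ((σ k)⁻¹ * ‖g‖ ^ 2) := by nlinarith [hchain]
        exact le_of_mul_le_mul_right h2 hpos
      -- conclude via Armijo
      have hA := hArmijo k
      rw [hgd] at hA
      rw [hx k]
      have hfin : C * ‖g‖ ^ 2 ≤ c₁ * α k * ((σ k)⁻¹ * ‖g‖ ^ 2) := by
        have h5 : c₁ * ‖g‖ ^ 2 / L * (1 - c₂) ≤ c₁ * ‖g‖ ^ 2 / L * (L * α k * (σ k)⁻¹) :=
          mul_le_mul_of_nonneg_left hstep (by positivity)
        have hL' : L ≠ 0 := ne_of_gt hL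
        calc C * ‖g‖ ^ 2 = c₁ * ‖g‖ ^ 2 / L * (1 - c₂) := by
              rw [hCdef]; field_simp
          _ ≤ c₁ * ‖g‖ ^ 2 / L * (L * α k * (σ k)⁻¹) := h5
          _ = c₁ * α k * ((σ k)⁻¹ * ‖g‖ ^ 2) := by field_simp
      linarith [hA, hfin]
  -- per-step decrease of fN
  have keyN : ∀ k, fN (x (k + 1)) ≤
      fN (x k) - C * ‖gradient (fS k) (x k)‖ ^ 2 + ζ k + 2 * ν k := by
    intro k
    have hν1 : |fS k (x k) - fN (x k)| ≤ ν k := by rw [hν k]; exact le_max_left _ _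
    have hν2 : |fS k (x (k + 1)) - fN (x (k + 1))| ≤ ν k := by
      rw [hν k]; exact le_max_right _ _
    have h1 := le_abs_self (fS k (x k) - fN (x k))
    have h2 := neg_abs_le (fS k (x (k + 1)) - fN (x (k + 1)))
    linarith [key k]
  have hν0 : ∀ k, 0 ≤ ν k := fun k => by
    rw [hν k]; exact le_trans (abs_nonneg _) (le_max_left _ _)
  -- telescoping bound
  set B : ℝ := fN (x 0) - fstar + (∑' i, ζ i) + 2 * (∑' i, ν i) with hB
  have tel : ∀ K : ℕ, ∑ k ∈ Finset.range K, C * ‖gradient (fS k) (x k)‖ ^ 2 ≤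
      fN (x 0) - fN (x K) + ∑ k ∈ Finset.range K, (ζ k + 2 * ν k) := by
    intro K
    induction K with
    | zero => simp only [Finset.sum_range_zero]; linarith
    | succ K ih =>
      rw [Finset.sum_range_succ, Finset.sum_range_succ]
      linarith [keyN K]
  have bound : ∀ K : ℕ, ∑ k ∈ Finset.range K, C * ‖gradient (fS k) (x k)‖ ^ 2 ≤ B := by
    intro K
    have h1 : fstar ≤ fN (x K) := hfstar.1 ⟨x K, rfl⟩
    have h2 : ∑ k ∈ Finset.range K, ζ k ≤ ∑' i, ζ i :=
      Summable.sum_le_tsum _ (fun i _ => hζ i) hζsum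
    have h3 : ∑ k ∈ Finset.range K, ν k ≤ ∑' i, ν i :=
      Summable.sum_le_tsum _ (fun i _ => hν0 i) hνsum
    have h4 : ∑ k ∈ Finset.range K, (ζ k + 2 * ν k) =
        (∑ k ∈ Finset.range K, ζ k) + 2 * ∑ k ∈ Finset.range K, ν k := by
      rw [Finset.sum_add_distrib, Finset.mul_sum]
    have := tel K
    rw [h4] at this
    rw [hB]
    linarith
  -- final argument
  intro ε hε
  by_contra hcon
  push_neg at hcon
  set K : ℕ := ⌈B * C⁻¹ * ε⁻¹ ^ 2⌉₊ with hK
  have hlow : ∀ k ∈ Finset.range (K + 1), C * ε ^ 2 ≤ C * ‖gradient (fS k) (x k)‖ ^ 2 := by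
    intro k hk
    have hk' : k ≤ K := Nat.lt_succ_iff.mp (Finset.mem_range.mp hk)
    have := hcon k hk'
    have hεg : ε ≤ ‖gradient (fS k) (x k)‖ := le_of_lt this
    apply mul_le_mul_of_nonneg_left _ (le_of_lt hC)
    exact pow_le_pow_left₀ (le_of_lt hε) hεg 2
  have hsum : ((K : ℝ) + 1) * (C * ε ^ 2) ≤ B := by
    have h1 : ∑ _k ∈ Finset.range (K + 1), C * ε ^ 2 ≤
        ∑ k ∈ Finset.range (K + 1), C * ‖gradient (fS k) (x k)‖ ^ 2 :=
      Finset.sum_le_sum hlow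
    rw [Finset.sum_const, Finset.card_range, nsmul_eq_mul] at h1
    push_cast at h1
    linarith [bound (K + 1)]
  have hceil : B * C⁻¹ * ε⁻¹ ^ 2 ≤ (K : ℝ) := Nat.le_ceil _
  have hBK : B ≤ (K : ℝ) * (C * ε ^ 2) := by
    have hpos : 0 < C * ε ^ 2 := by positivity
    have := mul_le_mul_of_nonneg_right hceil (le_of_lt hpos)
    have heq : B * C⁻¹ * ε⁻¹ ^ 2 * (C * ε ^ 2) = B := by
      field_simp
    rw [heq] at this
    exact this
  have : C * ε ^ 2 ≤ 0 := by nlinarith [hsum, hBK]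
  have : 0 < C * ε ^ 2 := by positivity
  linarith
end

section
/- In the subsampled spectral gradient setting with f_𝒩 strongly convex with constant c > 0 and unique minimizer x_*, for every γ with 0 < γ < min{2c, L} and every iteration k the recursion f_𝒩(x_{k+1}) − f_𝒩(x_*) ≤ (1 − Cγ)(f_𝒩(xₖ) − f_𝒩(x_*)) + ζₖ + 2νₖ + Cηₖ holds, where C = c₁(1 − c₂)/L, and moreover 1 − Cγ ∈ (0,1). -/
open scoped RealInnerProductSpace BigOperators
open Set Filter Topology

variable {E : Type*} [NormedAddCommGroup E] [InnerProductSpace ℝ E] [CompleteSpace E]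

/-- gradient of m * ∑ j∈T f j -/
lemma hasGradientAt_const_mul_sum {ι : Type*} (T : Finset ι) (f : ι → E → ℝ) (m : ℝ) (z : E)
    (hf : ∀ j ∈ T, DifferentiableAt ℝ (f j) z) :
    HasGradientAt (fun w => m * ∑ j ∈ T, f j w) (m • ∑ j ∈ T, gradient (f j) z) z := by
  have h1 : ∀ j ∈ T, HasFDerivAt (f j)
      (InnerProductSpace.toDual ℝ E (gradient (f j) z)) z := fun j hj =>
    hasGradientAt_iff_hasFDerivAt.mp (hf j hj).hasGradientAt
  have h2 : HasFDerivAt (fun w => ∑ j ∈ T, f j w)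
      (∑ j ∈ T, InnerProductSpace.toDual ℝ E (gradient (f j) z)) z := HasFDerivAt.fun_sum h1
  have h3 := h2.const_mul m
  rw [hasGradientAt_iff_hasFDerivAt]
  refine h3.congr_fderiv ?_
  simp [map_smul, map_sum]

/-- first order condition for convex functions via derivative along a segment -/
lemma convex_slope_le {h : E → ℝ} (hconv : ConvexOn ℝ Set.univ h) (x y : E) (D : ℝ)
    (hD : HasDerivAt (fun t : ℝ => h (x + t • (y - x))) D 0) :
    D ≤ h y - h x := by
  have hslope : ∀ t ∈ Ioc (0:ℝ) 1, (h (x + t • (y - x)) - h x) / t ≤ h y - h x := by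
    intro t ht
    have hcs := hconv.2 (mem_univ x) (mem_univ y) (by linarith [ht.2] : (0:ℝ) ≤ 1 - t)
      (le_of_lt ht.1) (by ring)
    have hxe : x + t • (y - x) = (1 - t) • x + t • y := by
      rw [smul_sub, sub_smul, one_smul]; abel
    rw [hxe]
    rw [div_le_iff₀ ht.1]
    calc h ((1-t) • x + t • y) - h x ≤ (1-t) * h x + t * h y - h x := by simp only [smul_eq_mul] at hcs; linarith [hcs]
      _ = (h y - h x) * t := by ring
  have htend : Tendsto (slope (fun t : ℝ => h (x + t • (y - x))) 0) (𝓝[>] 0) (𝓝 D) := by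
    have := hasDerivAt_iff_tendsto_slope.mp hD
    exact this.mono_left (nhdsWithin_mono _ (fun t ht => ne_of_gt ht))
  refine le_of_tendsto htend ?_
  filter_upwards [Ioc_mem_nhdsGT (zero_lt_one)] with t ht
  have : slope (fun t : ℝ => h (x + t • (y - x))) 0 t
      = (h (x + t • (y - x)) - h x) / t := by
    simp [slope_def_field, div_eq_mul_inv]
  rw [this]
  exact hslope t ht

lemma strong_convex_lower (fN : E → ℝ) (c : ℝ)
    (hconv : ConvexOn ℝ Set.univ (fun z => fN z - c / 2 * ‖z‖ ^ 2))
    (x y : E) (hdiff : DifferentiableAt ℝ fN x) :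
    fN x + ⟪gradient fN x, y - x⟫ + c / 2 * ‖y - x‖ ^ 2 ≤ fN y := by
  set u := y - x with hu
  set g := gradient fN x with hg
  have hline : HasDerivAt (fun t : ℝ => x + t • u) u 0 := by
    have h1 : HasDerivAt (fun t : ℝ => t • u) ((1:ℝ) • u) 0 := (hasDerivAt_id 0).smul_const u
    simpa using h1.const_add x
  have hfN' : HasDerivAt (fun t : ℝ => fN (x + t • u)) ⟪g, u⟫ 0 := by
    have hF : HasFDerivAt fN (InnerProductSpace.toDual ℝ E g) x :=
      hasGradientAt_iff_hasFDerivAt.mp hdiff.hasGradientAt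
    have := hF.comp_hasDerivAt_of_eq 0 hline (by simp)
    simpa [InnerProductSpace.toDual_apply_apply, Function.comp_def] using this
  have ha : HasDerivAt (fun t : ℝ => 2 * ⟪x, u⟫ * t) (2 * ⟪x, u⟫) 0 := by
    simpa using (hasDerivAt_id (0:ℝ)).const_mul (2 * ⟪x, u⟫)
  have hb : HasDerivAt (fun t : ℝ => ‖u‖ ^ 2 * t ^ 2) 0 0 := by
    simpa using (hasDerivAt_pow 2 (0:ℝ)).const_mul (‖u‖ ^ 2)
  have hq : HasDerivAt (fun t : ℝ => c / 2 * (‖x‖ ^ 2 + 2 * ⟪x, u⟫ * t + ‖u‖ ^ 2 * t ^ 2))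
      (c / 2 * (2 * ⟪x, u⟫ + 0)) 0 := ((ha.const_add (‖x‖ ^ 2)).add hb).const_mul (c / 2)
  have hnorm : ∀ t : ℝ, ‖x + t • u‖ ^ 2 = ‖x‖ ^ 2 + 2 * ⟪x, u⟫ * t + ‖u‖ ^ 2 * t ^ 2 := by
    intro t
    rw [norm_add_sq_real, real_inner_smul_right, norm_smul]
    simp [mul_pow]
    ring
  have hφ : HasDerivAt (fun t : ℝ => fN (x + t • u) - c / 2 * ‖x + t • u‖ ^ 2)
      (⟪g, u⟫ - c * ⟪x, u⟫) 0 := by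
    have h := hfN'.sub hq
    have he : (fun t : ℝ => fN (x + t • u) - c / 2 * ‖x + t • u‖ ^ 2)
        = fun t : ℝ => fN (x + t • u)
          - c / 2 * (‖x‖ ^ 2 + 2 * ⟪x, u⟫ * t + ‖u‖ ^ 2 * t ^ 2) := by
      funext t; rw [hnorm t]
    rw [he]
    refine h.congr_deriv ?_
    ring
  have hsl := convex_slope_le hconv x y _ hφ
  have hxy : ‖u‖ ^ 2 = ‖y‖ ^ 2 - 2 * ⟪y, x⟫ + ‖x‖ ^ 2 := by
    rw [hu]; exact norm_sub_sq_real y x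
  have hinner : ⟪x, u⟫ = ⟪x, y⟫ - ‖x‖ ^ 2 := by
    rw [hu, inner_sub_right, real_inner_self_eq_norm_sq]
  have hcomm : ⟪x, y⟫ = ⟪y, x⟫ := real_inner_comm y x
  have hkey : c / 2 * ‖u‖ ^ 2 + c * ⟪x, u⟫ = c / 2 * ‖y‖ ^ 2 - c / 2 * ‖x‖ ^ 2 := by
    rw [hxy, hinner, hcomm]; ring
  linarith [hsl, hkey]

lemma pl_ineq (fN : E → ℝ) (c : ℝ) (hc : 0 < c)
    (hconv : ConvexOn ℝ Set.univ (fun z => fN z - c / 2 * ‖z‖ ^ 2))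
    (xstar : E) (hmin : ∀ z, fN xstar ≤ fN z)
    (x : E) (hdiff : DifferentiableAt ℝ fN x) :
    2 * c * (fN x - fN xstar) ≤ ‖gradient fN x‖ ^ 2 := by
  have hsc := strong_convex_lower fN c hconv x xstar hdiff
  set g := gradient fN x with hg
  set w := xstar - x with hw
  have hexp : ‖c • w + g‖ ^ 2 = c ^ 2 * ‖w‖ ^ 2 + 2 * (c * ⟪w, g⟫) + ‖g‖ ^ 2 := by
    rw [norm_add_sq_real, real_inner_smul_left, norm_smul]
    simp [mul_pow]
  have hpos : (0:ℝ) ≤ ‖c • w + g‖ ^ 2 := by positivity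
  rw [hexp] at hpos
  have hcomm : ⟪g, w⟫ = ⟪w, g⟫ := real_inner_comm w g
  have h2 := mul_le_mul_of_nonneg_left hsc (by positivity : (0:ℝ) ≤ 2 * c)
  nlinarith [h2, hpos, hcomm, hc]
set_option maxHeartbeats 1000000 in
theorem subsampled_strongly_convex_recursion
    (n N : ℕ) (hn : 1 ≤ n) (hN : 1 ≤ N)
    (f : Fin N → EuclideanSpace ℝ (Fin n) → ℝ)
    (L : ℝ) (hL : 0 < L)
    (hfC1 : ∀ j, ContDiff ℝ 1 (f j))
    (hfLip : ∀ j u v, ‖gradient (f j) u - gradient (f j) v‖ ≤ L * ‖u - v‖)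
    (fN : EuclideanSpace ℝ (Fin n) → ℝ)
    (hfN : ∀ z, fN z = (1 / (N : ℝ)) * ∑ j, f j z)
    (S : ℕ → Finset (Fin N)) (hS : ∀ k, (S k).Nonempty)
    (fS : ℕ → EuclideanSpace ℝ (Fin n) → ℝ)
    (hfS : ∀ k z, fS k z = (1 / ((S k).card : ℝ)) * ∑ j ∈ S k, f j z)
    (x : ℕ → EuclideanSpace ℝ (Fin n))
    (α ζ σ : ℕ → ℝ)
    (σm σM : ℝ) (hσm : 0 < σm) (hσm1 : σm < 1) (hσM : 1 < σM)
    (hσ : ∀ k, σ k ∈ Set.Icc σm σM)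
    (d : ℕ → EuclideanSpace ℝ (Fin n))
    (hd : ∀ k, d k = -(σ k)⁻¹ • gradient (fS k) (x k))
    (hx : ∀ k, x (k + 1) = x k + α k • d k)
    (c₁ c₂ : ℝ) (hc₁ : 0 < c₁) (hc₁₂ : c₁ ≤ c₂) (hc₂ : c₂ < 1)
    (hα : ∀ k, 0 < α k) (hζ : ∀ k, 0 ≤ ζ k)
    (hArmijo : ∀ k, fS k (x k + α k • d k) ≤
      fS k (x k) + c₁ * α k * ⟪gradient (fS k) (x k), d k⟫ + ζ k)
    (hWolfe : ∀ k, ⟪gradient (fS k) (x k + α k • d k), d k⟫ ≥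
      c₂ * ⟪gradient (fS k) (x k), d k⟫)
    (ν : ℕ → ℝ)
    (hν : ∀ k, ν k = max |fS k (x k) - fN (x k)| |fS k (x (k + 1)) - fN (x (k + 1))|)
    (η : ℕ → ℝ)
    (hη : ∀ k, η k = max |‖gradient fN (x k)‖ ^ 2 - ‖gradient (fS k) (x k)‖ ^ 2|
      |‖gradient fN (x (k + 1))‖ ^ 2 - ‖gradient (fS k) (x (k + 1))‖ ^ 2|)
    (c : ℝ) (hc : 0 < c)
    (hconv : ConvexOn ℝ Set.univ (fun z => fN z - c / 2 * ‖z‖ ^ 2))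
    (xstar : EuclideanSpace ℝ (Fin n)) (hmin : ∀ z, fN xstar ≤ fN z) :
    ∀ γ : ℝ, 0 < γ → γ < min (2 * c) L →
      (1 - c₁ * (1 - c₂) / L * γ ∈ Set.Ioo (0 : ℝ) 1) ∧
      ∀ k, fN (x (k + 1)) - fN xstar ≤
        (1 - c₁ * (1 - c₂) / L * γ) * (fN (x k) - fN xstar) +
          ζ k + 2 * ν k + c₁ * (1 - c₂) / L * η k := by
  have h1c₂ : 0 < 1 - c₂ := by linarith
  have hdiffj : ∀ (j : Fin N) (z : EuclideanSpace ℝ (Fin n)), DifferentiableAt ℝ (f j) z :=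
    fun j z => ((hfC1 j).differentiable one_ne_zero).differentiableAt
  have hgS : ∀ k z, HasGradientAt (fS k)
      ((1 / ((S k).card : ℝ)) • ∑ j ∈ S k, gradient (f j) z) z := by
    intro k z
    have heq : fS k = fun w => (1 / ((S k).card : ℝ)) * ∑ j ∈ S k, f j w := funext (hfS k)
    rw [heq]
    exact hasGradientAt_const_mul_sum (S k) f _ z (fun j _ => hdiffj j z)
  have hgSval : ∀ k z, gradient (fS k) z
      = (1 / ((S k).card : ℝ)) • ∑ j ∈ S k, gradient (f j) z := fun k z => (hgS k z).gradient
  have hgN : ∀ z, HasGradientAt fN ((1 / (N : ℝ)) • ∑ j, gradient (f j) z) z := by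
    intro z
    have heq : fN = fun w => (1 / (N : ℝ)) * ∑ j, f j w := funext hfN
    rw [heq]
    exact hasGradientAt_const_mul_sum Finset.univ f _ z (fun j _ => hdiffj j z)
  have hdiffN : ∀ z, DifferentiableAt ℝ fN z := fun z => (hgN z).differentiableAt
  have hcardpos : ∀ k, (0:ℝ) < ((S k).card : ℝ) := fun k => by
    exact_mod_cast Finset.card_pos.mpr (hS k)
  have hLipS : ∀ k u v, ‖gradient (fS k) u - gradient (fS k) v‖ ≤ L * ‖u - v‖ := by
    intro k u v
    rw [hgSval, hgSval, ← smul_sub, ← Finset.sum_sub_distrib, norm_smul]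
    have h1 : ‖∑ j ∈ S k, (gradient (f j) u - gradient (f j) v)‖
        ≤ ∑ j ∈ S k, ‖gradient (f j) u - gradient (f j) v‖ := norm_sum_le _ _
    have h2 : ∑ j ∈ S k, ‖gradient (f j) u - gradient (f j) v‖
        ≤ ∑ j ∈ S k, L * ‖u - v‖ := Finset.sum_le_sum (fun j _ => hfLip j u v)
    rw [Finset.sum_const, nsmul_eq_mul] at h2
    have hm := hcardpos k
    have hnn : ‖(1 / ((S k).card : ℝ))‖ = 1 / ((S k).card : ℝ) := by
      rw [Real.norm_eq_abs, abs_of_pos (by positivity)]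
    rw [hnn]
    calc 1 / ((S k).card : ℝ) * ‖∑ j ∈ S k, (gradient (f j) u - gradient (f j) v)‖
        ≤ 1 / ((S k).card : ℝ) * (((S k).card : ℝ) * (L * ‖u - v‖)) := by
          apply mul_le_mul_of_nonneg_left (le_trans h1 h2) (by positivity)
      _ = L * ‖u - v‖ := by field_simp
  have hσpos : ∀ k, 0 < σ k := fun k => lt_of_lt_of_le hσm (hσ k).1
  have key : ∀ k, fS k (x (k+1)) ≤ fS k (x k)
      - (c₁ * (1 - c₂) / L) * ‖gradient (fS k) (x k)‖ ^ 2 + ζ k := by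
    intro k
    have hs := hσpos k
    have hgd : ⟪gradient (fS k) (x k), d k⟫
        = -((σ k)⁻¹ * ‖gradient (fS k) (x k)‖ ^ 2) := by
      rw [hd k, real_inner_smul_right, real_inner_self_eq_norm_sq]
      ring
    by_cases hg0 : gradient (fS k) (x k) = 0
    · have hdk0 : d k = 0 := by rw [hd k, hg0, smul_zero]
      have hx1 : x (k+1) = x k := by rw [hx k, hdk0, smul_zero, add_zero]
      have hA := hArmijo k
      rw [hdk0] at hA
      simp only [smul_zero, add_zero, inner_zero_right, mul_zero] at hA
      rw [hx1, hg0]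
      simp only [norm_zero]
      ring_nf
      linarith [hA, hζ k]
    · have hgpos : 0 < ‖gradient (fS k) (x k)‖ := norm_pos_iff.mpr hg0
      have hw := hWolfe k
      have hnd : ‖d k‖ = (σ k)⁻¹ * ‖gradient (fS k) (x k)‖ := by
        rw [hd k, norm_smul, Real.norm_eq_abs, abs_neg, abs_of_pos (inv_pos.mpr hs)]
      have hΔ : ‖gradient (fS k) (x k + α k • d k) - gradient (fS k) (x k)‖
          ≤ L * (α k * ‖d k‖) := by
        have h := hLipS k (x k + α k • d k) (x k)
        rw [add_sub_cancel_left, norm_smul, Real.norm_eq_abs, abs_of_pos (hα k)] at h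
        linarith [h]
      have hib : ⟪gradient (fS k) (x k + α k • d k) - gradient (fS k) (x k), d k⟫
          ≤ ‖gradient (fS k) (x k + α k • d k) - gradient (fS k) (x k)‖ * ‖d k‖ :=
        real_inner_le_norm _ _
      have hsub : ⟪gradient (fS k) (x k + α k • d k) - gradient (fS k) (x k), d k⟫
          = ⟪gradient (fS k) (x k + α k • d k), d k⟫ - ⟪gradient (fS k) (x k), d k⟫ :=
        inner_sub_left _ _ _
      have h3 : ⟪gradient (fS k) (x k + α k • d k), d k⟫ - ⟪gradient (fS k) (x k), d k⟫
          ≤ (L * (α k * ‖d k‖)) * ‖d k‖ := by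
        rw [← hsub]
        exact le_trans hib (mul_le_mul_of_nonneg_right hΔ (norm_nonneg _))
      have h4 : (c₂ - 1) * ⟪gradient (fS k) (x k), d k⟫ ≤ (L * (α k * ‖d k‖)) * ‖d k‖ := by
        have : (c₂ - 1) * ⟪gradient (fS k) (x k), d k⟫
            ≤ ⟪gradient (fS k) (x k + α k • d k), d k⟫ - ⟪gradient (fS k) (x k), d k⟫ := by
          linarith [hw]
        linarith [h3]
      rw [hgd, hnd] at h4
      have hdpos : 0 < (σ k)⁻¹ * ‖gradient (fS k) (x k)‖ ^ 2 :=
        mul_pos (inv_pos.mpr hs) (pow_pos hgpos 2)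
      have h6 : (1 - c₂) * ((σ k)⁻¹ * ‖gradient (fS k) (x k)‖ ^ 2)
          ≤ (L * (α k * (σ k)⁻¹)) * ((σ k)⁻¹ * ‖gradient (fS k) (x k)‖ ^ 2) := by
        nlinarith [h4]
      have hfrac : 1 - c₂ ≤ L * (α k * (σ k)⁻¹) := le_of_mul_le_mul_right h6 hdpos
      have h7 : (1 - c₂) / L ≤ α k * (σ k)⁻¹ := by
        rw [div_le_iff₀ hL]; linarith [hfrac]
      have hαb : c₁ * ((1 - c₂) / L) * ‖gradient (fS k) (x k)‖ ^ 2
          ≤ c₁ * (α k * (σ k)⁻¹) * ‖gradient (fS k) (x k)‖ ^ 2 :=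
        mul_le_mul_of_nonneg_right (mul_le_mul_of_nonneg_left h7 hc₁.le) (sq_nonneg _)
      have hA := hArmijo k
      rw [hgd] at hA
      rw [hx k]
      ring_nf at hA hαb ⊢
      linarith [hA, hαb]
  intro γ hγ0 hγmin
  obtain ⟨hγ2c, hγL⟩ := lt_min_iff.mp hγmin
  have hKpos : 0 < c₁ * (1 - c₂) / L := div_pos (mul_pos hc₁ h1c₂) hL
  refine ⟨⟨?_, ?_⟩, ?_⟩
  · have h14 : c₁ * (1 - c₂) ≤ 1/4 := by nlinarith [sq_nonneg (2*c₂ - 1)]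
    have hγL' : γ / L < 1 := (div_lt_one hL).mpr hγL
    have hγLnn : 0 ≤ γ / L := by positivity
    have hKγ : c₁ * (1 - c₂) / L * γ = (c₁ * (1 - c₂)) * (γ / L) := by ring
    have : c₁ * (1 - c₂) / L * γ < 1 := by rw [hKγ]; nlinarith [h14, hγL', hγLnn]
    linarith
  · have : 0 < c₁ * (1 - c₂) / L * γ := mul_pos hKpos hγ0
    linarith
  · intro k
    have hν1 : fN (x (k+1)) ≤ fS k (x (k+1)) + ν k := by
      rw [hν k]
      have h := neg_abs_le (fS k (x (k+1)) - fN (x (k+1)))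
      have h2 := le_max_right |fS k (x k) - fN (x k)| |fS k (x (k+1)) - fN (x (k+1))|
      linarith
    have hν2 : fS k (x k) ≤ fN (x k) + ν k := by
      rw [hν k]
      have h := le_abs_self (fS k (x k) - fN (x k))
      have h2 := le_max_left |fS k (x k) - fN (x k)| |fS k (x (k+1)) - fN (x (k+1))|
      linarith
    have hη1 : ‖gradient fN (x k)‖ ^ 2 - ‖gradient (fS k) (x k)‖ ^ 2 ≤ η k := by
      rw [hη k]
      have h := le_abs_self (‖gradient fN (x k)‖ ^ 2 - ‖gradient (fS k) (x k)‖ ^ 2)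
      have h2 := le_max_left |‖gradient fN (x k)‖ ^ 2 - ‖gradient (fS k) (x k)‖ ^ 2|
        |‖gradient fN (x (k+1))‖ ^ 2 - ‖gradient (fS k) (x (k+1))‖ ^ 2|
      linarith
    have hpl := pl_ineq fN c hc hconv xstar hmin (x k) (hdiffN (x k))
    have hfxk : 0 ≤ fN (x k) - fN xstar := by linarith [hmin (x k)]
    have hkey := key k
    have hgd2 : γ * (fN (x k) - fN xstar) ≤ ‖gradient fN (x k)‖ ^ 2 := by
      nlinarith [hpl, hfxk, hγ2c]
    have hA : (c₁ * (1 - c₂) / L) * (γ * (fN (x k) - fN xstar))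
        ≤ (c₁ * (1 - c₂) / L) * ‖gradient fN (x k)‖ ^ 2 :=
      mul_le_mul_of_nonneg_left hgd2 hKpos.le
    have hB : (c₁ * (1 - c₂) / L) * (‖gradient fN (x k)‖ ^ 2 - η k)
        ≤ (c₁ * (1 - c₂) / L) * ‖gradient (fS k) (x k)‖ ^ 2 :=
      mul_le_mul_of_nonneg_left (by linarith [hη1]) hKpos.le
    ring_nf at hν1 hν2 hkey hA hB ⊢
    nlinarith [hν1, hν2, hkey, hA, hB]
end

section
/- In the subsampled spectral gradient setting with f_𝒩 strongly convex with constant c > 0 and unique minimizer x_*, there exists a constant ρ ∈ (0,1) such that for every index k the optimality gap satisfies f_𝒩(x_{k+1}) − f_𝒩(x_*) ≤ ρ^{k+1}(f_𝒩(x₀) − f_𝒩(x_*)) + Σ_{j=0}^{k} ρʲ ζ_{k−j} + Σ_{j=0}^{k} ρʲ (2ν_{k−j} + C η_{k−j}), where C = c₁(1 − c₂)/L. -/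
open scoped RealInnerProductSpace BigOperators

variable {E : Type*} [NormedAddCommGroup E] [InnerProductSpace ℝ E] [CompleteSpace E]

lemma my_hasGradientAt_weighted_sum {ι : Type*} (s : Finset ι)
    (f : ι → E → ℝ) (g : ι → E) (a : ℝ) (x : E)
    (hf : ∀ j ∈ s, HasGradientAt (f j) (g j) x) :
    HasGradientAt (fun z => a * ∑ j ∈ s, f j z) (a • ∑ j ∈ s, g j) x := by
  have h1 : HasFDerivAt (fun z => ∑ j ∈ s, f j z)
      (∑ j ∈ s, InnerProductSpace.toDual ℝ E (g j)) x :=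
    HasFDerivAt.fun_sum (fun j hj => hf j hj)
  have h2 := h1.const_mul a
  have h3 : InnerProductSpace.toDual ℝ E (a • ∑ j ∈ s, g j)
      = a • ∑ j ∈ s, InnerProductSpace.toDual ℝ E (g j) := by
    simp [map_sum]
  rw [hasGradientAt_iff_hasFDerivAt, h3]
  exact h2

lemma my_first_order {g : E → ℝ} {G : E → E}
    (hg : ∀ z, HasGradientAt g (G z) z)
    (hcv : ConvexOn ℝ Set.univ g) (x y : E) :
    g x + ⟪G x, y - x⟫ ≤ g y := by
  set φ : ℝ → ℝ := fun t => g (x + t • (y - x)) with hφ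
  have hc : ∀ t : ℝ, HasDerivAt (fun t : ℝ => x + t • (y - x)) (y - x) t := by
    intro t
    simpa using ((hasDerivAt_id t).smul_const (y - x)).const_add x
  have hder : ∀ t : ℝ, HasDerivAt φ ⟪G (x + t • (y - x)), y - x⟫ t := by
    intro t
    have h := (hg (x + t • (y - x))).hasFDerivAt.comp_hasDerivAt t (hc t)
    simp [InnerProductSpace.toDual_apply_apply] at h
    exact h
  have hcvφ : ConvexOn ℝ Set.univ φ := by
    have := hcv.comp_affineMap (AffineMap.lineMap x y : ℝ →ᵃ[ℝ] E)
    have he : (g ∘ (AffineMap.lineMap x y : ℝ →ᵃ[ℝ] E)) = φ := by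
      funext t
      have : (AffineMap.lineMap x y : ℝ →ᵃ[ℝ] E) t = x + t • (y - x) := by
        rw [AffineMap.lineMap_apply_module']
        abel
      simp [hφ, Function.comp, this]
    rw [Set.preimage_univ] at this
    rwa [he] at this
  have hslope := hcvφ.le_slope_of_hasDerivAt (Set.mem_univ (0:ℝ)) (Set.mem_univ 1)
     zero_lt_one (by simpa using hder 0)
  rw [slope_def_field] at hslope
  have h0 : φ 0 = g x := by simp [hφ]
  have h1 : φ 1 = g y := by simp [hφ]
  rw [h0, h1] at hslope
  linarith [hslope]

lemma my_strong {g : E → ℝ} {G : E → E}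
    (hg : ∀ z, HasGradientAt g (G z) z) {c : ℝ}
    (hcv : ConvexOn ℝ Set.univ (fun z => g z - c / 2 * ‖z‖ ^ 2)) (x y : E) :
    g x + ⟪G x, y - x⟫ + c / 2 * ‖y - x‖ ^ 2 ≤ g y := by
  have hgh : ∀ z : E, HasGradientAt (fun z => g z - c / 2 * ‖z‖ ^ 2) (G z - c • z) z := by
    intro z
    have h1 := (hg z).hasFDerivAt
    have h2 := (hasStrictFDerivAt_norm_sq z).hasFDerivAt.const_mul (c / 2)
    have h3 := h1.sub h2
    rw [hasGradientAt_iff_hasFDerivAt]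
    refine h3.congr_fderiv ?_
    ext w
    simp only [InnerProductSpace.toDual_apply_apply, inner_sub_left, real_inner_smul_left,
      ContinuousLinearMap.coe_sub', Pi.sub_apply, ContinuousLinearMap.coe_smul',
      Pi.smul_apply, smul_eq_mul, ContinuousLinearMap.smul_apply, innerSL_apply_apply]
    have h2s : (2 : ℕ) • ⟪z, w⟫ = 2 * ⟪z, w⟫ := by
      simp [two_smul]; ring
    rw [h2s]
    ring
  have h := my_first_order hgh hcv x y
  have hn1 : ‖y - x‖ ^ 2 = ‖y‖ ^ 2 - 2 * ⟪y, x⟫ + ‖x‖ ^ 2 := norm_sub_sq_real y x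
  have hn2 : ⟪x, y - x⟫ = ⟪x, y⟫ - ‖x‖ ^ 2 := by
    rw [inner_sub_right, real_inner_self_eq_norm_sq]
  have hn3 : ⟪G x - c • x, y - x⟫ = ⟪G x, y - x⟫ - c * ⟪x, y - x⟫ := by
    rw [inner_sub_left, real_inner_smul_left]
  have hn4 : ⟪x, y⟫ = ⟪y, x⟫ := real_inner_comm y x
  rw [hn2] at hn3
  rw [hn3, hn4] at h
  rw [hn1]
  linarith

set_option maxHeartbeats 1000000 in
theorem subsampled_optimality_gap_bound
    (n N : ℕ) (hn : 1 ≤ n) (hN : 1 ≤ N)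
    (f : Fin N → EuclideanSpace ℝ (Fin n) → ℝ)
    (L : ℝ) (hL : 0 < L)
    (hfC1 : ∀ j, ContDiff ℝ 1 (f j))
    (hfLip : ∀ j u v, ‖gradient (f j) u - gradient (f j) v‖ ≤ L * ‖u - v‖)
    (fN : EuclideanSpace ℝ (Fin n) → ℝ)
    (hfN : ∀ z, fN z = (1 / (N : ℝ)) * ∑ j, f j z)
    (S : ℕ → Finset (Fin N)) (hS : ∀ k, (S k).Nonempty)
    (fS : ℕ → EuclideanSpace ℝ (Fin n) → ℝ)
    (hfS : ∀ k z, fS k z = (1 / ((S k).card : ℝ)) * ∑ j ∈ S k, f j z)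
    (x : ℕ → EuclideanSpace ℝ (Fin n))
    (α ζ σ : ℕ → ℝ)
    (σm σM : ℝ) (hσm : 0 < σm) (hσm1 : σm < 1) (hσM : 1 < σM)
    (hσ : ∀ k, σ k ∈ Set.Icc σm σM)
    (d : ℕ → EuclideanSpace ℝ (Fin n))
    (hd : ∀ k, d k = -(σ k)⁻¹ • gradient (fS k) (x k))
    (hx : ∀ k, x (k + 1) = x k + α k • d k)
    (c₁ c₂ : ℝ) (hc₁ : 0 < c₁) (hc₁₂ : c₁ ≤ c₂) (hc₂ : c₂ < 1)
    (hα : ∀ k, 0 < α k) (hζ : ∀ k, 0 ≤ ζ k)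
    (hArmijo : ∀ k, fS k (x k + α k • d k) ≤
      fS k (x k) + c₁ * α k * ⟪gradient (fS k) (x k), d k⟫ + ζ k)
    (hWolfe : ∀ k, ⟪gradient (fS k) (x k + α k • d k), d k⟫ ≥
      c₂ * ⟪gradient (fS k) (x k), d k⟫)
    (ν : ℕ → ℝ)
    (hν : ∀ k, ν k = max |fS k (x k) - fN (x k)| |fS k (x (k + 1)) - fN (x (k + 1))|)
    (η : ℕ → ℝ)
    (hη : ∀ k, η k = max |‖gradient fN (x k)‖ ^ 2 - ‖gradient (fS k) (x k)‖ ^ 2|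
      |‖gradient fN (x (k + 1))‖ ^ 2 - ‖gradient (fS k) (x (k + 1))‖ ^ 2|)
    (c : ℝ) (hc : 0 < c)
    (hconv : ConvexOn ℝ Set.univ (fun z => fN z - c / 2 * ‖z‖ ^ 2))
    (xstar : EuclideanSpace ℝ (Fin n)) (hmin : ∀ z, fN xstar ≤ fN z) :
    ∃ ρ ∈ Set.Ioo (0 : ℝ) 1, ∀ k,
      fN (x (k + 1)) - fN xstar ≤
        ρ ^ (k + 1) * (fN (x 0) - fN xstar) +
        (∑ j ∈ Finset.range (k + 1), ρ ^ j * ζ (k - j)) +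
        (∑ j ∈ Finset.range (k + 1), ρ ^ j *
          (2 * ν (k - j) + c₁ * (1 - c₂) / L * η (k - j))) := by
  classical
  have hdiff : ∀ j (z : EuclideanSpace ℝ (Fin n)), HasGradientAt (f j) (gradient (f j) z) z :=
    fun j z => (((hfC1 j).differentiable one_ne_zero) z).hasGradientAt
  -- average gradient facts
  have havg : ∀ (s : Finset (Fin N)) (F : EuclideanSpace ℝ (Fin n) → ℝ),
      (∀ z, F z = (1 / (s.card : ℝ)) * ∑ j ∈ s, f j z) → s.Nonempty →
      (∀ z, HasGradientAt F ((1 / (s.card : ℝ)) • ∑ j ∈ s, gradient (f j) z) z) ∧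
      (∀ u v, ‖gradient F u - gradient F v‖ ≤ L * ‖u - v‖) := by
    intro s F hF hs
    have hcard : (0 : ℝ) < s.card := by exact_mod_cast Finset.card_pos.2 hs
    have hFg : ∀ z, HasGradientAt F ((1 / (s.card : ℝ)) • ∑ j ∈ s, gradient (f j) z) z := by
      intro z
      have h := my_hasGradientAt_weighted_sum s f (fun j => gradient (f j) z)
        (1 / (s.card : ℝ)) z (fun j _ => hdiff j z)
      have hFe : F = fun z => (1 / (s.card : ℝ)) * ∑ j ∈ s, f j z := funext hF
      rw [hFe]
      exact h
    refine ⟨hFg, ?_⟩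
    intro u v
    rw [(hFg u).gradient, (hFg v).gradient, ← smul_sub, ← Finset.sum_sub_distrib, norm_smul]
    have hb : ‖∑ j ∈ s, (gradient (f j) u - gradient (f j) v)‖ ≤ s.card * (L * ‖u - v‖) := by
      calc ‖∑ j ∈ s, (gradient (f j) u - gradient (f j) v)‖
          ≤ ∑ j ∈ s, ‖gradient (f j) u - gradient (f j) v‖ := norm_sum_le _ _
        _ ≤ ∑ j ∈ s, L * ‖u - v‖ := Finset.sum_le_sum fun j _ => hfLip j u v
        _ = s.card * (L * ‖u - v‖) := by rw [Finset.sum_const, nsmul_eq_mul]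
    have hna : ‖(1 / (s.card : ℝ))‖ = 1 / (s.card : ℝ) := by
      rw [Real.norm_eq_abs, abs_of_pos]
      positivity
    rw [hna]
    calc (1 / (s.card : ℝ)) * ‖∑ j ∈ s, (gradient (f j) u - gradient (f j) v)‖
        ≤ (1 / (s.card : ℝ)) * (s.card * (L * ‖u - v‖)) := by
          apply mul_le_mul_of_nonneg_left hb
          positivity
      _ = L * ‖u - v‖ := by field_simp
  haveI : Nonempty (Fin N) := ⟨⟨0, hN⟩⟩
  have hNavg := havg Finset.univ fN
    (by
      intro z
      rw [hfN z]
      norm_num [Finset.card_univ])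
    Finset.univ_nonempty
  have hSavg := fun k => havg (S k) (fS k) (hfS k) (hS k)
  have hNdiff : ∀ z, HasGradientAt fN (gradient fN z) z :=
    fun z => ((hNavg.1 z).differentiableAt).hasGradientAt
  have hLipN := hNavg.2
  have hLipS : ∀ k u v, ‖gradient (fS k) u - gradient (fS k) v‖ ≤ L * ‖u - v‖ :=
    fun k => (hSavg k).2
  have hstrong : ∀ u v, fN u + ⟪gradient fN u, v - u⟫ + c / 2 * ‖v - u‖ ^ 2 ≤ fN v :=
    fun u v => my_strong hNdiff hconv u v
  -- Polyak-Lojasiewicz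
  have hPL : ∀ u, 2 * c * (fN u - fN xstar) ≤ ‖gradient fN u‖ ^ 2 := by
    intro u
    have h := hstrong u xstar
    have hin : -(‖gradient fN u‖ * ‖xstar - u‖) ≤ ⟪gradient fN u, xstar - u⟫ := by
      have h1 := abs_real_inner_le_norm (gradient fN u) (xstar - u)
      have h2 := neg_abs_le ⟪gradient fN u, xstar - u⟫
      linarith
    nlinarith [sq_nonneg (‖gradient fN u‖ - c * ‖xstar - u‖), norm_nonneg (xstar - u), hc]
  -- c ≤ L
  have hcL : c ≤ L := by
    set u : EuclideanSpace ℝ (Fin n) := EuclideanSpace.single ⟨0, hn⟩ (1 : ℝ) with hu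
    have hun : ‖u - 0‖ = 1 := by simp [hu, EuclideanSpace.norm_single]
    have h1 := hstrong u 0
    have h2 := hstrong 0 u
    have e1 : ⟪gradient fN u, (0 : EuclideanSpace ℝ (Fin n)) - u⟫
        = -⟪gradient fN u, u - 0⟫ := by
      have : (0 : EuclideanSpace ℝ (Fin n)) - u = -(u - 0) := by abel
      rw [this, inner_neg_right]
    have e2 : ‖(0 : EuclideanSpace ℝ (Fin n)) - u‖ = ‖u - 0‖ := norm_sub_rev _ _
    rw [e1, e2, hun] at h1
    rw [hun] at h2
    have hsub : ⟪gradient fN u - gradient fN 0, u - 0⟫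
        = ⟪gradient fN u, u - 0⟫ - ⟪gradient fN 0, u - 0⟫ := inner_sub_left _ _ _
    have hi := real_inner_le_norm (gradient fN u - gradient fN 0) (u - 0)
    have hLip := hLipN u 0
    rw [hun] at hi hLip
    nlinarith [h1, h2, hsub, hi, hLip]
  set C : ℝ := c₁ * (1 - c₂) / L with hC
  have hCpos : 0 < C := by
    apply div_pos
    · nlinarith
    · exact hL
  set ρ : ℝ := 1 - 2 * c * C with hρ
  have hρ1 : ρ < 1 := by
    have : 0 < 2 * c * C := by positivity
    simp only [hρ]
    linarith
  have hρ0 : 0 < ρ := by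
    have h14 : c₁ * (1 - c₂) ≤ 1 / 4 := by nlinarith [sq_nonneg (1 - 2 * c₂)]
    have hlt : 2 * c * (c₁ * (1 - c₂)) < L := by nlinarith
    have : 2 * c * C < 1 := by
      rw [hC, show 2 * c * (c₁ * (1 - c₂) / L) = 2 * c * (c₁ * (1 - c₂)) / L by ring,
        div_lt_one hL]
      exact hlt
    simp only [hρ]
    linarith
  -- key one-step estimate
  have key : ∀ k, fN (x (k + 1)) - fN xstar ≤
      ρ * (fN (x k) - fN xstar) + ζ k + (2 * ν k + C * η k) := by
    intro k
    set g : EuclideanSpace ℝ (Fin n) := gradient (fS k) (x k) with hg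
    have hσk := hσ k
    have hσk0 : 0 < σ k := lt_of_lt_of_le hσm hσk.1
    have hσi : 0 < (σ k)⁻¹ := inv_pos.2 hσk0
    have hgd : d k = -(σ k)⁻¹ • g := by rw [hd k, ← hg]
    have hinner : ⟪g, d k⟫ = -((σ k)⁻¹ * ‖g‖ ^ 2) := by
      rw [hgd, real_inner_smul_right, real_inner_self_eq_norm_sq]
      ring
    have hdn : ‖d k‖ = (σ k)⁻¹ * ‖g‖ := by
      rw [hgd, norm_smul, Real.norm_eq_abs, abs_neg, abs_of_pos hσi]
    have hxd : ‖x (k + 1) - x k‖ = α k * ‖d k‖ := by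
      rw [hx k]
      simp [norm_smul, abs_of_pos (hα k)]
    -- step-size lower bound consequence
    have hstep : C * ‖g‖ ^ 2 ≤ c₁ * α k * (σ k)⁻¹ * ‖g‖ ^ 2 := by
      by_cases hg0 : g = 0
      · simp [hg0]
      · have hgn : 0 < ‖g‖ := norm_pos_iff.2 hg0
        have hW := hWolfe k
        rw [← hx k, ← hg] at hW
        have hsub : ⟪gradient (fS k) (x (k + 1)) - g, d k⟫
            = ⟪gradient (fS k) (x (k + 1)), d k⟫ - ⟪g, d k⟫ := inner_sub_left _ _ _
        have hi := real_inner_le_norm (gradient (fS k) (x (k + 1)) - g) (d k)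
        have hLip := hLipS k (x (k + 1)) (x k)
        have hA : (1 - c₂) * ((σ k)⁻¹ * ‖g‖ ^ 2) ≤
            L * (α k * ((σ k)⁻¹ * ‖g‖)) * ((σ k)⁻¹ * ‖g‖) := by
          have hb1 : ⟪gradient (fS k) (x (k + 1)) - g, d k⟫ ≤
              L * (α k * ((σ k)⁻¹ * ‖g‖)) * ((σ k)⁻¹ * ‖g‖) := by
            calc ⟪gradient (fS k) (x (k + 1)) - g, d k⟫
                ≤ ‖gradient (fS k) (x (k + 1)) - g‖ * ‖d k‖ := hi
              _ ≤ (L * ‖x (k + 1) - x k‖) * ‖d k‖ := by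
                  apply mul_le_mul_of_nonneg_right hLip (norm_nonneg _)
              _ = L * (α k * ((σ k)⁻¹ * ‖g‖)) * ((σ k)⁻¹ * ‖g‖) := by
                  rw [hxd, hdn]
                  try ring
          have hb2 : (1 - c₂) * ((σ k)⁻¹ * ‖g‖ ^ 2) ≤
              ⟪gradient (fS k) (x (k + 1)) - g, d k⟫ := by
            rw [hsub, hinner]
            rw [hinner] at hW
            linarith [hW]
          linarith
        have hpos : 0 < (σ k)⁻¹ * ‖g‖ ^ 2 := mul_pos hσi (pow_pos hgn 2)
        have hLas : (1 - c₂) ≤ L * α k * (σ k)⁻¹ := by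
          rw [← mul_le_mul_iff_of_pos_right hpos]
          calc (1 - c₂) * ((σ k)⁻¹ * ‖g‖ ^ 2)
              ≤ L * (α k * ((σ k)⁻¹ * ‖g‖)) * ((σ k)⁻¹ * ‖g‖) := hA
            _ = L * α k * (σ k)⁻¹ * ((σ k)⁻¹ * ‖g‖ ^ 2) := by ring
        have hdiv : (1 - c₂) / L ≤ α k * (σ k)⁻¹ := by
          rw [div_le_iff₀ hL]
          linarith [hLas]
        calc C * ‖g‖ ^ 2 = c₁ * ((1 - c₂) / L) * ‖g‖ ^ 2 := by rw [hC]; ring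
          _ ≤ c₁ * (α k * (σ k)⁻¹) * ‖g‖ ^ 2 := by
              apply mul_le_mul_of_nonneg_right _ (sq_nonneg _)
              exact mul_le_mul_of_nonneg_left hdiv hc₁.le
          _ = c₁ * α k * (σ k)⁻¹ * ‖g‖ ^ 2 := by ring
    -- Armijo consequence
    have hArm : fS k (x (k + 1)) ≤ fS k (x k) - c₁ * α k * ((σ k)⁻¹ * ‖g‖ ^ 2) + ζ k := by
      have h := hArmijo k
      rw [← hx k, ← hg] at h
      rw [hinner] at h
      linarith
    -- error transfers
    have hν1 : fS k (x k) ≤ fN (x k) + ν k := by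
      have h : |fS k (x k) - fN (x k)| ≤ ν k := by
        rw [hν k]
        exact le_max_left _ _
      linarith [(abs_sub_le_iff.1 h).1]
    have hν2 : fN (x (k + 1)) ≤ fS k (x (k + 1)) + ν k := by
      have h : |fS k (x (k + 1)) - fN (x (k + 1))| ≤ ν k := by
        rw [hν k]
        exact le_max_right _ _
      linarith [(abs_sub_le_iff.1 h).2]
    have hη1 : ‖gradient fN (x k)‖ ^ 2 - ‖g‖ ^ 2 ≤ η k := by
      rw [hg]
      have h : |‖gradient fN (x k)‖ ^ 2 - ‖gradient (fS k) (x k)‖ ^ 2| ≤ η k := by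
        rw [hη k]
        exact le_max_left _ _
      linarith [(abs_sub_le_iff.1 h).1]
    have hPLk := hPL (x k)
    have he : C * (‖gradient fN (x k)‖ ^ 2 - ‖g‖ ^ 2) ≤ C * η k :=
      mul_le_mul_of_nonneg_left hη1 hCpos.le
    have hf2 : C * (2 * c * (fN (x k) - fN xstar)) ≤ C * ‖gradient fN (x k)‖ ^ 2 :=
      mul_le_mul_of_nonneg_left hPLk hCpos.le
    have hρe : ρ * (fN (x k) - fN xstar)
        = (fN (x k) - fN xstar) - C * (2 * c * (fN (x k) - fN xstar)) := by
      rw [hρ]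
      ring
    rw [hρe]
    linarith [hArm, hν1, hν2, he, hf2, hstep]
  -- induction
  refine ⟨ρ, ⟨hρ0, hρ1⟩, ?_⟩
  intro k
  induction k with
  | zero =>
      have h := key 0
      simpa [Finset.sum_range_one] using h
  | succ k ih =>
      have hk := key (k + 1)
      have hmul := mul_le_mul_of_nonneg_left ih hρ0.le
      have hsum : ∀ w : ℕ → ℝ, ∑ j ∈ Finset.range (k + 1 + 1), ρ ^ j * w (k + 1 - j)
          = ρ * ∑ j ∈ Finset.range (k + 1), ρ ^ j * w (k - j) + w (k + 1) := by
        intro w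
        rw [Finset.sum_range_succ', Finset.mul_sum]
        simp only [Nat.succ_sub_succ, pow_zero, one_mul, Nat.sub_zero]
        congr 1
        exact Finset.sum_congr rfl fun j _ => by rw [pow_succ]; ring
      rw [hsum ζ, hsum (fun i => 2 * ν i + C * η i)]
      rw [mul_add, mul_add] at hmul
      have hpow : ρ * (ρ ^ (k + 1) * (fN (x 0) - fN xstar))
          = ρ ^ (k + 1 + 1) * (fN (x 0) - fN xstar) := by
        rw [pow_succ]
        ring
      linarith [hk, hmul, hpow.le, hpow.ge]
end

section
/- (R-linear convergence.) In the subsampled spectral gradient setting with f_𝒩 strongly convex with constant c > 0 and unique minimizer x_*, if the three sequences {ζₖ}, {νₖ}, {ηₖ} each converge to 0 R-linearly, then the optimality gap f_𝒩(xₖ) − f_𝒩(x_*) converges to 0 R-linearly. -/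
open scoped RealInnerProductSpace BigOperators
open InnerProductSpace

/-- A real sequence converges to 0 R-linearly if `|a k| ≤ M * q ^ k` for some
`M > 0` and `q ∈ (0,1)`. -/
def RLinearTo0 (a : ℕ → ℝ) : Prop :=
  ∃ M > (0 : ℝ), ∃ q ∈ Set.Ioo (0 : ℝ) 1, ∀ k, |a k| ≤ M * q ^ k

section Aux

lemma hasGradAt_const_mul_sum {n : ℕ} {ι : Type*} (T : Finset ι)
    (f : ι → EuclideanSpace ℝ (Fin n) → ℝ) (g : ι → EuclideanSpace ℝ (Fin n)) (a : ℝ)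
    (x : EuclideanSpace ℝ (Fin n))
    (h : ∀ j ∈ T, HasGradientAt (f j) (g j) x) :
    HasGradientAt (fun z => a * ∑ j ∈ T, f j z) (a • ∑ j ∈ T, g j) x := by
  rw [hasGradientAt_iff_hasFDerivAt]
  have h2 : (toDual ℝ (EuclideanSpace ℝ (Fin n))) (a • ∑ j ∈ T, g j)
      = a • ∑ j ∈ T, (toDual ℝ (EuclideanSpace ℝ (Fin n))) (g j) := by
    rw [map_smulₛₗ, map_sum]; norm_num
  rw [h2]
  exact HasFDerivAt.const_mul (HasFDerivAt.fun_sum fun j hj => (h j hj).hasFDerivAt) a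

lemma avg_lip {n : ℕ} {ι : Type*} (T : Finset ι) (hT : T.Nonempty)
    (g : ι → EuclideanSpace ℝ (Fin n) → EuclideanSpace ℝ (Fin n)) (L : ℝ)
    (hg : ∀ j ∈ T, ∀ u v, ‖g j u - g j v‖ ≤ L * ‖u - v‖)
    (u v : EuclideanSpace ℝ (Fin n)) :
    ‖(1/(T.card:ℝ)) • ∑ j ∈ T, g j u - (1/(T.card:ℝ)) • ∑ j ∈ T, g j v‖ ≤ L * ‖u - v‖ := by
  have hcard : (0:ℝ) < T.card := by exact_mod_cast Finset.card_pos.mpr hT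
  rw [← smul_sub, ← Finset.sum_sub_distrib, norm_smul, Real.norm_eq_abs,
    abs_of_pos (by positivity)]
  have h1 : ‖∑ j ∈ T, (g j u - g j v)‖ ≤ (T.card : ℝ) * (L * ‖u - v‖) := by
    refine (norm_sum_le _ _).trans ?_
    have := Finset.sum_le_card_nsmul T (fun j => ‖g j u - g j v‖) (L * ‖u - v‖)
      (fun j hj => hg j hj u v)
    simpa [nsmul_eq_mul] using this
  calc 1/(T.card:ℝ) * ‖∑ j ∈ T, (g j u - g j v)‖
      ≤ 1/(T.card:ℝ) * ((T.card : ℝ) * (L * ‖u - v‖)) := by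
        exact mul_le_mul_of_nonneg_left h1 (by positivity)
    _ = L * ‖u - v‖ := by field_simp

lemma strong_first_order {n : ℕ} (fN : EuclideanSpace ℝ (Fin n) → ℝ) (c : ℝ)
    (hconv : ConvexOn ℝ Set.univ (fun z => fN z - c / 2 * ‖z‖ ^ 2))
    (G : EuclideanSpace ℝ (Fin n) → EuclideanSpace ℝ (Fin n))
    (hG : ∀ z, HasGradientAt fN (G z) z)
    (u v : EuclideanSpace ℝ (Fin n)) :
    fN u + ⟪G u, v - u⟫ + c / 2 * ‖v - u‖ ^ 2 ≤ fN v := by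
  set g : EuclideanSpace ℝ (Fin n) → ℝ := fun z => fN z - c / 2 * ‖z‖ ^ 2 with hg
  set φ : ℝ → ℝ := fun t => g (t • (v - u) + u) with hφ
  have hφconv : ConvexOn ℝ Set.univ φ := by
    have := hconv.comp_affineMap (AffineMap.lineMap u v)
    rw [Set.preimage_univ] at this
    exact this
  have hline : HasDerivAt (fun t : ℝ => t • (v - u) + u) (v - u) 0 := by
    simpa using ((hasDerivAt_id (0:ℝ)).smul_const (v - u)).add_const u
  have hA : HasDerivAt (fun t : ℝ => fN (t • (v - u) + u)) ⟪G u, v - u⟫ 0 := by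
    have hf : HasFDerivAt fN (toDual ℝ _ (G u)) ((0:ℝ) • (v - u) + u) := by
      simpa using ((hG u).hasFDerivAt)
    have h := hf.comp_hasDerivAt 0 hline
    simp only [toDual_apply_apply] at h
    exact h
  have hB : HasDerivAt (fun t : ℝ => c / 2 * ‖t • (v - u) + u‖ ^ 2)
      (c * ⟪u, v - u⟫) 0 := by
    have hEq : (fun t : ℝ => c / 2 * ‖t • (v - u) + u‖ ^ 2)
        = fun t : ℝ => c / 2 * ‖u‖ ^ 2 + (c * ⟪u, v - u⟫) * t + (c / 2 * ‖v - u‖ ^ 2) * t ^ 2 := by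
      funext t
      rw [norm_add_sq_real, norm_smul, real_inner_smul_left, real_inner_comm u (v - u)]
      simp only [norm_mul, mul_pow, sq_abs, Real.norm_eq_abs]
      ring
    rw [hEq]
    have h1 : HasDerivAt (fun t : ℝ => (c * ⟪u, v - u⟫) * t) (c * ⟪u, v - u⟫) 0 := by
      simpa using (hasDerivAt_id (0:ℝ)).const_mul (c * ⟪u, v - u⟫)
    have h2 : HasDerivAt (fun t : ℝ => (c / 2 * ‖v - u‖ ^ 2) * t ^ 2)
        ((c / 2 * ‖v - u‖ ^ 2) * (2 * 0)) 0 := by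
      simpa using (hasDerivAt_pow 2 (0:ℝ)).const_mul (c / 2 * ‖v - u‖ ^ 2)
    have h := ((hasDerivAt_const (0:ℝ) (c / 2 * ‖u‖ ^ 2)).add h1).add h2
    simp only [mul_zero, zero_add, add_zero] at h
    exact h
  have hφ' : HasDerivAt φ (⟪G u, v - u⟫ - c * ⟪u, v - u⟫) 0 := hA.sub hB
  have e1 : φ 1 = fN v - c / 2 * ‖v‖ ^ 2 := by
    norm_num [hφ, hg]
  have e0 : φ 0 = fN u - c / 2 * ‖u‖ ^ 2 := by
    norm_num [hφ, hg]
  have hslope := hφconv.le_slope_of_hasDerivAt (Set.mem_univ 0) (Set.mem_univ 1) one_pos hφ'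
  rw [slope_def_field, e1, e0, sub_zero, div_one] at hslope
  have hns : ‖v - u‖ ^ 2 = ‖v‖ ^ 2 - 2 * ⟪u, v⟫ + ‖u‖ ^ 2 := by
    rw [norm_sub_sq_real, real_inner_comm]
  have hiu : ⟪u, v - u⟫ = ⟪u, v⟫ - ‖u‖ ^ 2 := by
    rw [inner_sub_right, real_inner_self_eq_norm_sq]
  rw [hiu] at hslope
  rw [hns]
  nlinarith [hslope]

lemma rlinear_aux (a e : ℕ → ℝ) (θ E q : ℝ) (hθ0 : 0 < θ) (hθ1 : θ < 1)
    (hq0 : 0 < q) (hq1 : q < 1) (hE : 0 < E) (ha : ∀ k, 0 ≤ a k)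
    (he : ∀ k, e k ≤ E * q ^ k) (hrec : ∀ k, a (k+1) ≤ θ * a k + e k) :
    RLinearTo0 a := by
  set m := max θ q with hm
  have hm0 : 0 < m := lt_of_lt_of_le hθ0 (le_max_left _ _)
  have hm1 : m < 1 := max_lt hθ1 hq1
  have hbound : ∀ k, a k ≤ a 0 * m ^ k + (E/m) * k * m ^ k := by
    intro k; induction k with
    | zero => simp
    | succ k ih =>
      have h2 : θ * a k ≤ m * a k := mul_le_mul_of_nonneg_right (le_max_left _ _) (ha k)
      have h3 : e k ≤ E * m ^ k := (he k).trans
        (mul_le_mul_of_nonneg_left (pow_le_pow_left₀ hq0.le (le_max_right _ _) k) hE.le)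
      have h4 : m * a k ≤ m * (a 0 * m ^ k + (E/m) * k * m ^ k) :=
        mul_le_mul_of_nonneg_left ih hm0.le
      have h5 : m * (a 0 * m ^ k + (E/m) * k * m ^ k) + E * m ^ k
          = a 0 * m ^ (k+1) + (E/m) * ((k:ℝ)+1) * m ^ (k+1) := by
        field_simp
        ring
      have := hrec k
      push_cast
      linarith
  set ρ := (1+m)/2 with hρ
  have hρm : m < ρ := by rw [hρ]; linarith
  have hρ1 : ρ < 1 := by rw [hρ]; linarith
  have hρ0 : 0 < ρ := lt_trans hm0 hρm
  set t := (1-m)/(2*m) with ht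
  have ht0 : 0 < t := div_pos (by linarith) (by linarith)
  have hkm : ∀ k : ℕ, (k:ℝ) * m ^ k ≤ ρ ^ k / t := by
    intro k
    have hb : 1 + (k:ℝ) * t ≤ (1+t)^k := one_add_mul_le_pow (by linarith) k
    have h1t : 1 + t = ρ / m := by rw [hρ, ht]; field_simp; ring
    have hmk : 0 < m ^ k := pow_pos hm0 k
    have hkt : (k:ℝ) * t ≤ ρ ^ k / m ^ k := by
      rw [← div_pow, ← h1t]
      have hk0 : (0:ℝ) ≤ k := Nat.cast_nonneg k
      linarith [hb]
    have h5 : (k:ℝ) * t * m ^ k ≤ ρ ^ k := by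
      rw [← le_div_iff₀ hmk]; exact hkt
    rw [le_div_iff₀ ht0]
    nlinarith [h5]
  have hM : (0:ℝ) < a 0 + E/(m*t) + 1 := by
    have h := ha 0
    have h2 : 0 < E/(m*t) := by positivity
    linarith
  refine ⟨a 0 + E/(m*t) + 1, hM, ρ, ⟨hρ0, hρ1⟩, fun k => ?_⟩
  rw [abs_of_nonneg (ha k)]
  have b1 : a 0 * m ^ k ≤ a 0 * ρ ^ k :=
    mul_le_mul_of_nonneg_left (pow_le_pow_left₀ hm0.le hρm.le k) (ha 0)
  have b2 : (E/m) * ((k:ℝ) * m ^ k) ≤ (E/m) * (ρ ^ k / t) :=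
    mul_le_mul_of_nonneg_left (hkm k) (by positivity)
  have b3 : (E/m) * (ρ ^ k / t) = (E/(m*t)) * ρ ^ k := by
    field_simp
  have b4 : (0:ℝ) < ρ ^ k := pow_pos hρ0 k
  have := hbound k
  nlinarith [this, b1, b2]

end Aux

set_option maxHeartbeats 1000000 in
theorem subsampled_rlinear_convergence
    (n N : ℕ) (hn : 1 ≤ n) (hN : 1 ≤ N)
    (f : Fin N → EuclideanSpace ℝ (Fin n) → ℝ)
    (L : ℝ) (hL : 0 < L)
    (hfC1 : ∀ j, ContDiff ℝ 1 (f j))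
    (hfLip : ∀ j u v, ‖gradient (f j) u - gradient (f j) v‖ ≤ L * ‖u - v‖)
    (fN : EuclideanSpace ℝ (Fin n) → ℝ)
    (hfN : ∀ z, fN z = (1 / (N : ℝ)) * ∑ j, f j z)
    (S : ℕ → Finset (Fin N)) (hS : ∀ k, (S k).Nonempty)
    (fS : ℕ → EuclideanSpace ℝ (Fin n) → ℝ)
    (hfS : ∀ k z, fS k z = (1 / ((S k).card : ℝ)) * ∑ j ∈ S k, f j z)
    (x : ℕ → EuclideanSpace ℝ (Fin n))
    (α ζ σ : ℕ → ℝ)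
    (σm σM : ℝ) (hσm : 0 < σm) (hσm1 : σm < 1) (hσM : 1 < σM)
    (hσ : ∀ k, σ k ∈ Set.Icc σm σM)
    (d : ℕ → EuclideanSpace ℝ (Fin n))
    (hd : ∀ k, d k = -(σ k)⁻¹ • gradient (fS k) (x k))
    (hx : ∀ k, x (k + 1) = x k + α k • d k)
    (c₁ c₂ : ℝ) (hc₁ : 0 < c₁) (hc₁₂ : c₁ ≤ c₂) (hc₂ : c₂ < 1)
    (hα : ∀ k, 0 < α k) (hζ : ∀ k, 0 ≤ ζ k)
    (hArmijo : ∀ k, fS k (x k + α k • d k) ≤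
      fS k (x k) + c₁ * α k * ⟪gradient (fS k) (x k), d k⟫ + ζ k)
    (hWolfe : ∀ k, ⟪gradient (fS k) (x k + α k • d k), d k⟫ ≥
      c₂ * ⟪gradient (fS k) (x k), d k⟫)
    (ν : ℕ → ℝ)
    (hν : ∀ k, ν k = max |fS k (x k) - fN (x k)| |fS k (x (k + 1)) - fN (x (k + 1))|)
    (η : ℕ → ℝ)
    (hη : ∀ k, η k = max |‖gradient fN (x k)‖ ^ 2 - ‖gradient (fS k) (x k)‖ ^ 2|
      |‖gradient fN (x (k + 1))‖ ^ 2 - ‖gradient (fS k) (x (k + 1))‖ ^ 2|)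
    (c : ℝ) (hc : 0 < c)
    (hconv : ConvexOn ℝ Set.univ (fun z => fN z - c / 2 * ‖z‖ ^ 2))
    (xstar : EuclideanSpace ℝ (Fin n)) (hmin : ∀ z, fN xstar ≤ fN z)
    (hζR : RLinearTo0 ζ) (hνR : RLinearTo0 ν) (hηR : RLinearTo0 η) :
    RLinearTo0 (fun k => fN (x k) - fN xstar) := by
  -- basic facts
  have hc₂0 : 0 < c₂ := lt_of_lt_of_le hc₁ hc₁₂
  have hdiff : ∀ j z, HasGradientAt (f j) (gradient (f j) z) z := fun j z =>
    (((hfC1 j).differentiable one_ne_zero) z).hasGradientAt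
  -- gradient formulas
  have hGS : ∀ k z, HasGradientAt (fS k)
      ((1 / ((S k).card : ℝ)) • ∑ j ∈ S k, gradient (f j) z) z := by
    intro k z
    have heq : fS k = fun z' => (1 / ((S k).card : ℝ)) * ∑ j ∈ S k, f j z' := funext (hfS k)
    rw [heq]
    exact hasGradAt_const_mul_sum (S k) f _ _ z (fun j _ => hdiff j z)
  have hGSval : ∀ k z, gradient (fS k) z
      = (1 / ((S k).card : ℝ)) • ∑ j ∈ S k, gradient (f j) z := fun k z => (hGS k z).gradient
  have hunivne : (Finset.univ : Finset (Fin N)).Nonempty := by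
    have : Nonempty (Fin N) := ⟨⟨0, hN⟩⟩
    exact Finset.univ_nonempty
  have hcardN : (Finset.univ : Finset (Fin N)).card = N := Finset.card_univ.trans (Fintype.card_fin N)
  have hGN : ∀ z, HasGradientAt fN
      ((1 / (N : ℝ)) • ∑ j, gradient (f j) z) z := by
    intro z
    have heq : fN = fun z' => (1 / (N : ℝ)) * ∑ j, f j z' := funext hfN
    rw [heq]
    have := hasGradAt_const_mul_sum (Finset.univ : Finset (Fin N)) f
      (fun j => gradient (f j) z) (1 / (N : ℝ)) z (fun j _ => hdiff j z)
    exact this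
  have hGNval : ∀ z, gradient fN z = (1 / (N : ℝ)) • ∑ j, gradient (f j) z :=
    fun z => (hGN z).gradient
  have hGN' : ∀ z, HasGradientAt fN (gradient fN z) z := by
    intro z; rw [hGNval z]; exact hGN z
  -- Lipschitz of subsample / full gradients
  have lipS : ∀ k u v, ‖gradient (fS k) u - gradient (fS k) v‖ ≤ L * ‖u - v‖ := by
    intro k u v
    rw [hGSval k u, hGSval k v]
    exact avg_lip (S k) (hS k) (fun j => gradient (f j)) L (fun j _ => hfLip j) u v
  have lipN : ∀ u v, ‖gradient fN u - gradient fN v‖ ≤ L * ‖u - v‖ := by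
    intro u v
    rw [hGNval u, hGNval v]
    have := avg_lip (Finset.univ : Finset (Fin N)) hunivne (fun j => gradient (f j)) L
      (fun j _ => hfLip j) u v
    rwa [hcardN] at this
  -- first-order strong convexity
  have hfo := strong_first_order fN c hconv (fun z => gradient fN z) hGN'
  -- PL inequality
  have hPL : ∀ u, 2 * c * (fN u - fN xstar) ≤ ‖gradient fN u‖ ^ 2 := by
    intro u
    have h1 := hfo u xstar
    have h2 : -(‖gradient fN u‖ * ‖xstar - u‖) ≤ ⟪gradient fN u, xstar - u⟫ := by
      have := abs_real_inner_le_norm (gradient fN u) (xstar - u)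
      have h3 := neg_abs_le ⟪gradient fN u, xstar - u⟫
      linarith
    nlinarith [sq_nonneg (‖gradient fN u‖ - c * ‖xstar - u‖), hc, norm_nonneg (xstar - u),
      norm_nonneg (gradient fN u)]
  -- c ≤ L
  have hcL : c ≤ L := by
    set u0 : EuclideanSpace ℝ (Fin n) := 0 with hu0
    set v0 : EuclideanSpace ℝ (Fin n) := EuclideanSpace.single ⟨0, hn⟩ (1:ℝ) with hv0
    have hnv : ‖v0‖ = 1 := by rw [hv0, EuclideanSpace.norm_single]; norm_num
    have hvu : ‖v0 - u0‖ = 1 := by rw [hu0, sub_zero, hnv]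
    have huv : ‖u0 - v0‖ = 1 := by rw [hu0, zero_sub, norm_neg, hnv]
    have s1 := hfo u0 v0
    have s2 := hfo v0 u0
    have hCS : ⟪gradient fN u0 - gradient fN v0, u0 - v0⟫
        ≤ ‖gradient fN u0 - gradient fN v0‖ * ‖u0 - v0‖ := real_inner_le_norm _ _
    have hlipuv : ‖gradient fN u0 - gradient fN v0‖ ≤ L * ‖u0 - v0‖ := lipN u0 v0
    have e1 : ⟪gradient fN u0, v0 - u0⟫ + ⟪gradient fN v0, u0 - v0⟫
        = -⟪gradient fN u0 - gradient fN v0, u0 - v0⟫ := by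
      rw [inner_sub_left]
      have hneg : v0 - u0 = -(u0 - v0) := by abel
      rw [hneg, inner_neg_right]
      ring
    rw [hvu] at s1
    rw [huv] at s2 hCS hlipuv
    nlinarith [s1, s2, e1, hCS, hlipuv]
  -- constants
  set C : ℝ := c₁ * (1 - c₂) / L with hC
  have hC0 : 0 < C := by
    apply div_pos _ hL
    exact mul_pos hc₁ (by linarith)
  set θ : ℝ := 1 - 2 * c * C with hθ
  have hXc : c₁ * (1 - c₂) ≤ 1/4 := by nlinarith [sq_nonneg (2*c₂ - 1)]
  have hnum : 2 * c * (c₁ * (1 - c₂)) < L := by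
    nlinarith [mul_le_mul_of_nonneg_left hXc (by linarith : (0:ℝ) ≤ 2*c)]
  have hθ0 : 0 < θ := by
    have h1 : 2 * c * C < 1 := by
      rw [hC, show 2*c*(c₁*(1-c₂)/L) = (2*c*(c₁*(1-c₂)))/L by ring]
      exact (div_lt_one hL).mpr hnum
    rw [hθ]; linarith
  have hθ1 : θ < 1 := by
    have : 0 < 2 * c * C := by positivity
    rw [hθ]; linarith
  -- key step bound
  have hkey : ∀ k, c₁ * α k * ⟪gradient (fS k) (x k), d k⟫
      ≤ -(C * ‖gradient (fS k) (x k)‖ ^ 2) := by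
    intro k
    set g := gradient (fS k) (x k) with hgdef
    obtain ⟨hs1, hs2⟩ := hσ k
    have hs0 : 0 < σ k := lt_of_lt_of_le hσm hs1
    have inner1 : ⟪g, d k⟫ = -((σ k)⁻¹ * ‖g‖ ^ 2) := by
      rw [hd k, real_inner_smul_right, real_inner_self_eq_norm_sq]
      ring
    by_cases hg0 : g = 0
    · rw [inner1, hg0]
      simp
    · have hgn : 0 < ‖g‖ := norm_pos_iff.mpr hg0
      have dnorm : ‖d k‖ = (σ k)⁻¹ * ‖g‖ := by
        rw [hd k, norm_smul, Real.norm_eq_abs, abs_neg, abs_of_pos (inv_pos.mpr hs0)]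
      have hlip : ‖gradient (fS k) (x k + α k • d k) - g‖ ≤ L * (α k * ‖d k‖) := by
        have := lipS k (x k + α k • d k) (x k)
        rwa [add_sub_cancel_left, norm_smul, Real.norm_eq_abs, abs_of_pos (hα k)] at this
      have h1 : ⟪gradient (fS k) (x k + α k • d k), d k⟫ - ⟪g, d k⟫
          ≤ (L * (α k * ‖d k‖)) * ‖d k‖ := by
        calc ⟪gradient (fS k) (x k + α k • d k), d k⟫ - ⟪g, d k⟫
            = ⟪gradient (fS k) (x k + α k • d k) - g, d k⟫ := (inner_sub_left _ _ _).symm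
          _ ≤ ‖gradient (fS k) (x k + α k • d k) - g‖ * ‖d k‖ := real_inner_le_norm _ _
          _ ≤ _ := mul_le_mul_of_nonneg_right hlip (norm_nonneg _)
      have hW := hWolfe k
      rw [inner1] at hW h1
      have h2 : (1 - c₂) * ((σ k)⁻¹ * ‖g‖ ^ 2) ≤ (L * (α k * ‖d k‖)) * ‖d k‖ := by
        nlinarith [hW, h1]
      rw [dnorm] at h2
      have hX : 0 < (σ k)⁻¹ * ‖g‖ ^ 2 := by positivity
      have hαs : (1 - c₂) ≤ L * (α k * (σ k)⁻¹) := by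
        have h3 : (1 - c₂) * ((σ k)⁻¹ * ‖g‖ ^ 2)
            ≤ (L * (α k * (σ k)⁻¹)) * ((σ k)⁻¹ * ‖g‖ ^ 2) := by nlinarith [h2]
        exact le_of_mul_le_mul_right h3 hX
      have hd2 : (1 - c₂) / L ≤ α k * (σ k)⁻¹ := by
        rw [div_le_iff₀ hL]; linarith
      rw [inner1, hC]
      have hfin := mul_le_mul_of_nonneg_left hd2 (mul_nonneg hc₁.le (sq_nonneg ‖g‖))
      ring_nf at hfin ⊢
      linarith
  -- recursion for the gap
  set a : ℕ → ℝ := fun k => fN (x k) - fN xstar with ha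
  have ha0 : ∀ k, 0 ≤ a k := fun k => sub_nonneg.mpr (hmin (x k))
  have hrec : ∀ k, a (k+1) ≤ θ * a k + (ζ k + 2 * ν k + C * η k) := by
    intro k
    have hy := hx k
    have harm := hArmijo k
    rw [← hy] at harm
    have hk := hkey k
    have hν1 : fN (x (k+1)) - fS k (x (k+1)) ≤ ν k := by
      rw [hν k, abs_sub_comm (fS k (x (k+1)))]
      exact le_trans (le_abs_self _) (le_max_right _ _)
    have hν2 : fS k (x k) - fN (x k) ≤ ν k := by
      rw [hν k]
      exact le_trans (le_abs_self _) (le_max_left _ _)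
    have hη1 : ‖gradient fN (x k)‖ ^ 2 - ‖gradient (fS k) (x k)‖ ^ 2 ≤ η k := by
      rw [hη k]
      exact le_trans (le_abs_self _) (le_max_left _ _)
    have hPLk := hPL (x k)
    have m1 : C * (‖gradient fN (x k)‖ ^ 2 - ‖gradient (fS k) (x k)‖ ^ 2) ≤ C * η k :=
      mul_le_mul_of_nonneg_left hη1 hC0.le
    have m2 : C * (2 * c * (fN (x k) - fN xstar)) ≤ C * ‖gradient fN (x k)‖ ^ 2 :=
      mul_le_mul_of_nonneg_left hPLk hC0.le
    simp only [ha, hθ]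
    nlinarith [harm, hk, hν1, hν2, m1, m2]
  -- combine error sequences
  obtain ⟨M1, hM1, q1, hq1, hb1⟩ := hζR
  obtain ⟨M2, hM2, q2, hq2, hb2⟩ := hνR
  obtain ⟨M3, hM3, q3, hq3, hb3⟩ := hηR
  set q : ℝ := max q1 (max q2 q3) with hq
  have hq0 : 0 < q := lt_of_lt_of_le hq1.1 (le_max_left _ _)
  have hq1' : q < 1 := max_lt hq1.2 (max_lt hq2.2 hq3.2)
  set E : ℝ := M1 + 2 * M2 + C * M3 + 1 with hE
  have hE0 : 0 < E := by positivity
  have he : ∀ k, ζ k + 2 * ν k + C * η k ≤ E * q ^ k := by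
    intro k
    have p1 : ζ k ≤ M1 * q ^ k := le_trans (le_abs_self _)
      ((hb1 k).trans (mul_le_mul_of_nonneg_left
        (pow_le_pow_left₀ hq1.1.le (le_max_left _ _) k) hM1.le))
    have p2 : ν k ≤ M2 * q ^ k := le_trans (le_abs_self _)
      ((hb2 k).trans (mul_le_mul_of_nonneg_left
        (pow_le_pow_left₀ hq2.1.le (le_trans (le_max_left _ _) (le_max_right _ _)) k) hM2.le))
    have p3 : η k ≤ M3 * q ^ k := le_trans (le_abs_self _)
      ((hb3 k).trans (mul_le_mul_of_nonneg_left
        (pow_le_pow_left₀ hq3.1.le (le_trans (le_max_right _ _) (le_max_right _ _)) k) hM3.le))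
    have p4 : C * η k ≤ C * (M3 * q ^ k) := mul_le_mul_of_nonneg_left p3 hC0.le
    have p5 : (0:ℝ) < q ^ k := pow_pos hq0 k
    rw [hE]
    nlinarith [p1, p2, p4, p5]
  exact rlinear_aux a (fun k => ζ k + 2 * ν k + C * η k) θ E q hθ0 hθ1 hq0 hq1' hE0 ha0 he hrec
end

section
/- In the subsampled spectral gradient setting with f_𝒩 strongly convex with constant c > 0 and unique minimizer x_*, if {ζₖ}, {νₖ}, {ηₖ} each converge to 0 R-linearly, then there exist ρ̂ ∈ (0,1) and Q > 0 such that for every index k, f_𝒩(xₖ) − f_𝒩(x_*) ≤ ρ̂ᵏ (f_𝒩(x₀) − f_𝒩(x_*) + Q). -/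
open scoped RealInnerProductSpace BigOperators

section Aux
variable {E : Type*} [NormedAddCommGroup E] [InnerProductSpace ℝ E] [CompleteSpace E]

lemma aux_hasGradientAt_smul_sum {ι : Type*} (s : Finset ι) (f : ι → E → ℝ) (g : ι → E) (a : ℝ)
    (z : E) (hf : ∀ j ∈ s, HasGradientAt (f j) (g j) z) :
    HasGradientAt (fun w => a * ∑ j ∈ s, f j w) (a • ∑ j ∈ s, g j) z := by
  have h1 : HasFDerivAt (fun w => ∑ j ∈ s, f j w)
      (∑ j ∈ s, (InnerProductSpace.toDual ℝ E) (g j)) z :=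
    HasFDerivAt.fun_sum fun j hj => (hf j hj).hasFDerivAt
  have h2 := h1.const_mul a
  rw [hasGradientAt_iff_hasFDerivAt, map_smul, map_sum]
  exact h2

lemma aux_hasGradientAt_sub {f g : E → ℝ} {f' g' : E} {x : E}
    (hf : HasGradientAt f f' x) (hg : HasGradientAt g g' x) :
    HasGradientAt (fun z => f z - g z) (f' - g') x := by
  rw [hasGradientAt_iff_hasFDerivAt] at *
  rw [map_sub]
  exact hf.sub hg

lemma aux_hasGradientAt_half_sq_norm (c : ℝ) (z : E) :
    HasGradientAt (fun w : E => c / 2 * ‖w‖ ^ 2) (c • z) z := by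
  have h1 : HasFDerivAt (fun w : E => (inner ℝ w w : ℝ))
      ((fderivInnerCLM ℝ (z, z)).comp
        (((ContinuousLinearMap.id ℝ E)).prod ((ContinuousLinearMap.id ℝ E)))) z :=
    (hasFDerivAt_id z).inner ℝ (hasFDerivAt_id z)
  have h2 := h1.const_mul (c / 2)
  have heq : (fun w : E => c / 2 * (inner ℝ w w : ℝ)) = fun w : E => c / 2 * ‖w‖ ^ 2 := by
    funext w; rw [real_inner_self_eq_norm_sq]
  rw [heq] at h2
  rw [hasGradientAt_iff_hasFDerivAt]
  refine h2.congr_fderiv ?_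
  ext v
  simp [InnerProductSpace.toDual_apply_apply, fderivInnerCLM_apply, real_inner_smul_left,
    real_inner_comm z v]
  ring

lemma aux_convex_grad_ineq {φ : E → ℝ} (hφ : ConvexOn ℝ Set.univ φ)
    {x y g : E} (hg : HasGradientAt φ g x) :
    φ x + ⟪g, y - x⟫ ≤ φ y := by
  set γ : ℝ → E := fun t => x + t • (y - x) with hγdef
  have hcomp : (fun t : ℝ => φ (γ t)) = φ ∘ (AffineMap.lineMap x y) := by
    funext t
    simp only [Function.comp_apply, hγdef, AffineMap.lineMap_apply, vsub_eq_sub, vadd_eq_add]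
    congr 1
    abel
  have hconvh : ConvexOn ℝ Set.univ (fun t : ℝ => φ (γ t)) := by
    rw [hcomp]
    have := hφ.comp_affineMap (AffineMap.lineMap x y)
    simpa using this
  have hγd : HasDerivAt γ (y - x) 0 := by
    have := ((hasDerivAt_id (0 : ℝ)).smul_const (y - x)).const_add x
    simpa [hγdef] using this
  have hφ' : HasFDerivAt φ ((InnerProductSpace.toDual ℝ E) g) (γ 0) := by
    simpa [hγdef] using hg.hasFDerivAt
  have hderiv : HasDerivAt (fun t : ℝ => φ (γ t)) ⟪g, y - x⟫ 0 := by
    have := hφ'.comp_hasDerivAt 0 hγd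
    have h' : HasDerivAt (φ ∘ γ) ⟪g, y - x⟫ 0 := by
      simpa [InnerProductSpace.toDual_apply_apply] using this
    exact h'
  have hs := hconvh.le_slope_of_hasDerivWithinAt (Set.mem_univ (0 : ℝ)) (Set.mem_univ 1)
    one_pos hderiv.hasDerivWithinAt
  rw [slope_def_field] at hs
  have h0 : γ 0 = x := by simp [hγdef]
  have h1 : γ 1 = y := by simp [hγdef]
  rw [h0, h1] at hs
  simp at hs
  linarith
end Aux

set_option maxHeartbeats 1000000 in
theorem subsampled_geometric_gap_bound
    (n N : ℕ) (hn : 1 ≤ n) (hN : 1 ≤ N)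
    (f : Fin N → EuclideanSpace ℝ (Fin n) → ℝ)
    (L : ℝ) (hL : 0 < L)
    (hfC1 : ∀ j, ContDiff ℝ 1 (f j))
    (hfLip : ∀ j u v, ‖gradient (f j) u - gradient (f j) v‖ ≤ L * ‖u - v‖)
    (fN : EuclideanSpace ℝ (Fin n) → ℝ)
    (hfN : ∀ z, fN z = (1 / (N : ℝ)) * ∑ j, f j z)
    (S : ℕ → Finset (Fin N)) (hS : ∀ k, (S k).Nonempty)
    (fS : ℕ → EuclideanSpace ℝ (Fin n) → ℝ)
    (hfS : ∀ k z, fS k z = (1 / ((S k).card : ℝ)) * ∑ j ∈ S k, f j z)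
    (x : ℕ → EuclideanSpace ℝ (Fin n))
    (α ζ σ : ℕ → ℝ)
    (σm σM : ℝ) (hσm : 0 < σm) (hσm1 : σm < 1) (hσM : 1 < σM)
    (hσ : ∀ k, σ k ∈ Set.Icc σm σM)
    (d : ℕ → EuclideanSpace ℝ (Fin n))
    (hd : ∀ k, d k = -(σ k)⁻¹ • gradient (fS k) (x k))
    (hx : ∀ k, x (k + 1) = x k + α k • d k)
    (c₁ c₂ : ℝ) (hc₁ : 0 < c₁) (hc₁₂ : c₁ ≤ c₂) (hc₂ : c₂ < 1)
    (hα : ∀ k, 0 < α k) (hζ : ∀ k, 0 ≤ ζ k)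
    (hArmijo : ∀ k, fS k (x k + α k • d k) ≤
      fS k (x k) + c₁ * α k * ⟪gradient (fS k) (x k), d k⟫ + ζ k)
    (hWolfe : ∀ k, ⟪gradient (fS k) (x k + α k • d k), d k⟫ ≥
      c₂ * ⟪gradient (fS k) (x k), d k⟫)
    (ν : ℕ → ℝ)
    (hν : ∀ k, ν k = max |fS k (x k) - fN (x k)| |fS k (x (k + 1)) - fN (x (k + 1))|)
    (η : ℕ → ℝ)
    (hη : ∀ k, η k = max |‖gradient fN (x k)‖ ^ 2 - ‖gradient (fS k) (x k)‖ ^ 2|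
      |‖gradient fN (x (k + 1))‖ ^ 2 - ‖gradient (fS k) (x (k + 1))‖ ^ 2|)
    (c : ℝ) (hc : 0 < c)
    (hconv : ConvexOn ℝ Set.univ (fun z => fN z - c / 2 * ‖z‖ ^ 2))
    (xstar : EuclideanSpace ℝ (Fin n)) (hmin : ∀ z, fN xstar ≤ fN z)
    (hζR : RLinearTo0 ζ) (hνR : RLinearTo0 ν) (hηR : RLinearTo0 η) :
    ∃ ρ ∈ Set.Ioo (0 : ℝ) 1, ∃ Q > (0 : ℝ), ∀ k,
      fN (x k) - fN xstar ≤ ρ ^ k * (fN (x 0) - fN xstar + Q) := by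
  classical
  have hc₂0 : 0 < 1 - c₂ := by linarith
  -- gradients
  have hdiffj : ∀ j (z : EuclideanSpace ℝ (Fin n)), HasGradientAt (f j) (gradient (f j) z) z :=
    fun j z => (((hfC1 j).differentiable one_ne_zero) z).hasGradientAt
  have hgS : ∀ k z, HasGradientAt (fS k)
      ((1 / ((S k).card : ℝ)) • ∑ j ∈ S k, gradient (f j) z) z := by
    intro k z
    have hfun : fS k = fun w => (1 / ((S k).card : ℝ)) * ∑ j ∈ S k, f j w := funext (hfS k)
    rw [hfun]
    exact aux_hasGradientAt_smul_sum _ _ _ _ _ (fun j _ => hdiffj j z)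
  have hgS_eq : ∀ k z, gradient (fS k) z
      = (1 / ((S k).card : ℝ)) • ∑ j ∈ S k, gradient (f j) z :=
    fun k z => (hgS k z).gradient
  have hgN : ∀ z, HasGradientAt fN ((1 / (N : ℝ)) • ∑ j, gradient (f j) z) z := by
    intro z
    have hfun : fN = fun w => (1 / (N : ℝ)) * ∑ j, f j w := funext hfN
    rw [hfun]
    exact aux_hasGradientAt_smul_sum _ _ _ _ _ (fun j _ => hdiffj j z)
  -- Lipschitz gradient for subsampled functions
  have hcard : ∀ k, (0 : ℝ) < ((S k).card : ℝ) := fun k => by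
    exact_mod_cast (hS k).card_pos
  have hLipS : ∀ k u v, ‖gradient (fS k) u - gradient (fS k) v‖ ≤ L * ‖u - v‖ := by
    intro k u v
    rw [hgS_eq k u, hgS_eq k v, ← smul_sub, ← Finset.sum_sub_distrib, norm_smul]
    have h1 : ‖∑ j ∈ S k, (gradient (f j) u - gradient (f j) v)‖
        ≤ ∑ j ∈ S k, ‖gradient (f j) u - gradient (f j) v‖ := norm_sum_le _ _
    have h2 : ∑ j ∈ S k, ‖gradient (f j) u - gradient (f j) v‖
        ≤ ((S k).card : ℝ) * (L * ‖u - v‖) := by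
      have := Finset.sum_le_card_nsmul (S k) _ (L * ‖u - v‖) (fun j _ => hfLip j u v)
      simpa [nsmul_eq_mul] using this
    have hpos := hcard k
    have hnn : ‖(1 / (((S k).card : ℝ)))‖ = 1 / ((S k).card : ℝ) := by
      rw [Real.norm_eq_abs, abs_of_pos (by positivity)]
    rw [hnn]
    calc (1 / ((S k).card : ℝ)) * ‖∑ j ∈ S k, (gradient (f j) u - gradient (f j) v)‖
        ≤ (1 / ((S k).card : ℝ)) * (((S k).card : ℝ) * (L * ‖u - v‖)) := by
          exact mul_le_mul_of_nonneg_left (h1.trans h2) (by positivity)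
      _ = L * ‖u - v‖ := by field_simp
  -- the descent constant
  have hβ : 0 < c₁ * (1 - c₂) / L := by positivity
  have hσpos : ∀ k, 0 < σ k := fun k => lt_of_lt_of_le hσm (hσ k).1
  -- sufficient decrease on the subsampled function
  have hdec : ∀ k, fS k (x (k + 1)) ≤ fS k (x k)
      - (c₁ * (1 - c₂) / L) * ‖gradient (fS k) (x k)‖ ^ 2 + ζ k := by
    intro k
    have hx1 : x (k + 1) = x k + α k • d k := hx k
    by_cases hg0 : gradient (fS k) (x k) = 0
    · have hdk : d k = 0 := by rw [hd k, hg0]; simp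
      have hxk : x (k + 1) = x k := by rw [hx1, hdk]; simp
      rw [hxk, hg0]
      simp
      linarith [hζ k]
    · have hgpos : 0 < ‖gradient (fS k) (x k)‖ := norm_pos_iff.mpr hg0
      have hσk := hσpos k
      have hsinv : 0 < (σ k)⁻¹ := inv_pos.mpr hσk
      have hnd : ‖d k‖ = (σ k)⁻¹ * ‖gradient (fS k) (x k)‖ := by
        rw [hd k, norm_smul, Real.norm_eq_abs, abs_neg, abs_of_pos hsinv]
      have hinner : ⟪gradient (fS k) (x k), d k⟫
          = -((σ k)⁻¹ * ‖gradient (fS k) (x k)‖ ^ 2) := by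
        rw [hd k, real_inner_smul_right, real_inner_self_eq_norm_sq]
        ring
      have hW := hWolfe k
      rw [← hx1] at hW
      have hsub : (c₂ - 1) * ⟪gradient (fS k) (x k), d k⟫
          ≤ ⟪gradient (fS k) (x (k + 1)) - gradient (fS k) (x k), d k⟫ := by
        rw [inner_sub_left]
        have hid : (c₂ - 1) * ⟪gradient (fS k) (x k), d k⟫
            = c₂ * ⟪gradient (fS k) (x k), d k⟫ - ⟪gradient (fS k) (x k), d k⟫ := by ring
        rw [hid]
        linarith [hW]
      have hCS : ⟪gradient (fS k) (x (k + 1)) - gradient (fS k) (x k), d k⟫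
          ≤ (L * (α k * ‖d k‖)) * ‖d k‖ := by
        calc ⟪gradient (fS k) (x (k + 1)) - gradient (fS k) (x k), d k⟫
            ≤ ‖gradient (fS k) (x (k + 1)) - gradient (fS k) (x k)‖ * ‖d k‖ :=
              real_inner_le_norm _ _
          _ ≤ (L * ‖x (k + 1) - x k‖) * ‖d k‖ :=
              mul_le_mul_of_nonneg_right (hLipS k _ _) (norm_nonneg _)
          _ = (L * (α k * ‖d k‖)) * ‖d k‖ := by
              rw [hx1]
              rw [add_sub_cancel_left, norm_smul, Real.norm_eq_abs, abs_of_pos (hα k)]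
      have hstep1 : (1 - c₂) * ((σ k)⁻¹ * ‖gradient (fS k) (x k)‖ ^ 2)
          ≤ (L * (α k * (σ k)⁻¹)) * ((σ k)⁻¹ * ‖gradient (fS k) (x k)‖ ^ 2) := by
        have h1 : (c₂ - 1) * ⟪gradient (fS k) (x k), d k⟫
            = (1 - c₂) * ((σ k)⁻¹ * ‖gradient (fS k) (x k)‖ ^ 2) := by
          rw [hinner]; ring
        have h2 : (L * (α k * ‖d k‖)) * ‖d k‖
            = (L * (α k * (σ k)⁻¹)) * ((σ k)⁻¹ * ‖gradient (fS k) (x k)‖ ^ 2) := by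
          rw [hnd]; ring
        linarith [hsub, hCS, h1.symm.le, h2.le]
      have hmulpos : 0 < (σ k)⁻¹ * ‖gradient (fS k) (x k)‖ ^ 2 :=
        mul_pos hsinv (by positivity)
      have hαlb : 1 - c₂ ≤ L * (α k * (σ k)⁻¹) :=
        le_of_mul_le_mul_right hstep1 hmulpos
      have harmijo := hArmijo k
      rw [← hx1] at harmijo
      have hfinal : c₁ * α k * ⟪gradient (fS k) (x k), d k⟫
          ≤ -((c₁ * (1 - c₂) / L) * ‖gradient (fS k) (x k)‖ ^ 2) := by
        rw [hinner]
        have hlb : c₁ * ((1 - c₂) / L) * ‖gradient (fS k) (x k)‖ ^ 2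
            ≤ c₁ * (α k * (σ k)⁻¹) * ‖gradient (fS k) (x k)‖ ^ 2 := by
          apply mul_le_mul_of_nonneg_right _ (sq_nonneg _)
          apply mul_le_mul_of_nonneg_left _ hc₁.le
          rw [div_le_iff₀ hL]
          linarith [hαlb]
        have hid2 : c₁ * α k * -((σ k)⁻¹ * ‖gradient (fS k) (x k)‖ ^ 2)
            = -(c₁ * (α k * (σ k)⁻¹) * ‖gradient (fS k) (x k)‖ ^ 2) := by ring
        have hid3 : c₁ * (1 - c₂) / L * ‖gradient (fS k) (x k)‖ ^ 2
            = c₁ * ((1 - c₂) / L) * ‖gradient (fS k) (x k)‖ ^ 2 := by ring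
        rw [hid2]
        linarith [hlb, hid3.le, hid3.ge]
      linarith [harmijo, hfinal]
  -- Polyak–Łojasiewicz inequality from strong convexity
  have hPL : ∀ z, 2 * c * (fN z - fN xstar) ≤ ‖gradient fN z‖ ^ 2 := by
    intro z
    have hgrad : HasGradientAt fN (gradient fN z) z :=
      (hgN z).differentiableAt.hasGradientAt
    have hφ : HasGradientAt (fun w => fN w - c / 2 * ‖w‖ ^ 2)
        (gradient fN z - c • z) z :=
      aux_hasGradientAt_sub hgrad (aux_hasGradientAt_half_sq_norm c z)
    have hineq := aux_convex_grad_ineq hconv (y := xstar) hφ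
    have hexp : ⟪gradient fN z - c • z, xstar - z⟫
        = ⟪gradient fN z, xstar - z⟫ - c * ⟪z, xstar - z⟫ := by
      rw [inner_sub_left, real_inner_smul_left]
    have hnorm : ‖xstar - z‖ ^ 2 = ‖xstar‖ ^ 2 - 2 * ⟪xstar, z⟫ + ‖z‖ ^ 2 := by
      rw [← real_inner_self_eq_norm_sq, inner_sub_sub_self]
      rw [real_inner_self_eq_norm_sq, real_inner_self_eq_norm_sq, real_inner_comm z xstar]
      ring
    have hz : ⟪z, xstar - z⟫ = ⟪z, xstar⟫ - ‖z‖ ^ 2 := by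
      rw [inner_sub_right, real_inner_self_eq_norm_sq]
    have hcomm : ⟪xstar, z⟫ = ⟪z, xstar⟫ := real_inner_comm _ _
    rw [hexp, hz] at hineq
    have hkey : fN z + ⟪gradient fN z, xstar - z⟫ + c / 2 * ‖xstar - z‖ ^ 2 ≤ fN xstar := by
      rw [hnorm, hcomm]
      nlinarith [hineq]
    have hCS : -⟪gradient fN z, xstar - z⟫ ≤ ‖gradient fN z‖ * ‖xstar - z‖ := by
      have h1 := real_inner_le_norm (gradient fN z) (z - xstar)
      have h2 : ⟪gradient fN z, z - xstar⟫ = -⟪gradient fN z, xstar - z⟫ := by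
        rw [← inner_neg_right]
        congr 1
        abel
      rw [h2] at h1
      rwa [norm_sub_rev z xstar] at h1
    have h2 : fN z - fN xstar
        ≤ ‖gradient fN z‖ * ‖xstar - z‖ - c / 2 * ‖xstar - z‖ ^ 2 := by linarith
    nlinarith [h2, sq_nonneg (‖gradient fN z‖ - c * ‖xstar - z‖), hc,
      norm_nonneg (xstar - z)]
  -- error sequence bound
  obtain ⟨Mζ, hMζ, qζ, hqζ, hζb⟩ := hζR
  obtain ⟨Mν, hMν, qν, hqν, hνb⟩ := hνR
  obtain ⟨Mη, hMη, qη, hqη, hηb⟩ := hηR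
  set β : ℝ := c₁ * (1 - c₂) / L with hβdef
  set q : ℝ := max qζ (max qν qη) with hqdef
  have hq0 : 0 < q := lt_of_lt_of_le hqζ.1 (le_max_left _ _)
  have hq1 : q < 1 := by
    apply max_lt hqζ.2
    exact max_lt hqν.2 hqη.2
  set Me : ℝ := Mζ + 2 * Mν + β * Mη with hMedef
  have hMe : 0 < Me := by
    have := mul_pos hβ hMη
    rw [hMedef]
    nlinarith [hMζ, hMν]
  have he : ∀ k, ζ k + 2 * ν k + β * η k ≤ Me * q ^ k := by
    intro k
    have hqζk : qζ ^ k ≤ q ^ k := pow_le_pow_left₀ hqζ.1.le (le_max_left _ _) k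
    have hqνk : qν ^ k ≤ q ^ k :=
      pow_le_pow_left₀ hqν.1.le (le_trans (le_max_left _ _) (le_max_right _ _)) k
    have hqηk : qη ^ k ≤ q ^ k :=
      pow_le_pow_left₀ hqη.1.le (le_trans (le_max_right _ _) (le_max_right _ _)) k
    have h1 : ζ k ≤ Mζ * q ^ k :=
      le_trans (le_trans (le_abs_self _) (hζb k)) (mul_le_mul_of_nonneg_left hqζk hMζ.le)
    have h2 : ν k ≤ Mν * q ^ k :=
      le_trans (le_trans (le_abs_self _) (hνb k)) (mul_le_mul_of_nonneg_left hqνk hMν.le)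
    have h3 : η k ≤ Mη * q ^ k :=
      le_trans (le_trans (le_abs_self _) (hηb k)) (mul_le_mul_of_nonneg_left hqηk hMη.le)
    have h4 : β * η k ≤ β * (Mη * q ^ k) := mul_le_mul_of_nonneg_left h3 hβ.le
    rw [hMedef]
    nlinarith [h1, h2, h4]
  -- geometric one-step contraction
  set β' : ℝ := min β (1 / (4 * c)) with hβ'def
  have hβ'pos : 0 < β' := lt_min hβ (by positivity)
  have hβ'le : β' ≤ β := min_le_left _ _
  set ρ₀ : ℝ := 1 - 2 * c * β' with hρ₀def
  have hρ₀lt : ρ₀ < 1 := by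
    have := mul_pos (mul_pos (by norm_num : (0:ℝ) < 2) hc) hβ'pos
    rw [hρ₀def]; linarith
  have hρ₀pos : 0 < ρ₀ := by
    have h1 : β' ≤ 1 / (4 * c) := min_le_right _ _
    have h2 : 2 * c * β' ≤ 2 * c * (1 / (4 * c)) :=
      mul_le_mul_of_nonneg_left h1 (by positivity)
    have h3 : 2 * c * (1 / (4 * c)) = 1 / 2 := by field_simp; ring
    rw [hρ₀def]; linarith
  have hstep : ∀ k, fN (x (k + 1)) - fN xstar
      ≤ ρ₀ * (fN (x k) - fN xstar) + (ζ k + 2 * ν k + β * η k) := by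
    intro k
    have hν1 : fN (x (k + 1)) - fS k (x (k + 1)) ≤ ν k := by
      have h1 : |fS k (x (k + 1)) - fN (x (k + 1))| ≤ ν k := by
        rw [hν k]; exact le_max_right _ _
      have := (abs_le.mp h1).1
      linarith
    have hν0 : fS k (x k) - fN (x k) ≤ ν k := by
      have h1 : |fS k (x k) - fN (x k)| ≤ ν k := by
        rw [hν k]; exact le_max_left _ _
      linarith [(abs_le.mp h1).2]
    have hηk : ‖gradient fN (x k)‖ ^ 2 - ‖gradient (fS k) (x k)‖ ^ 2 ≤ η k := by
      have h1 : |‖gradient fN (x k)‖ ^ 2 - ‖gradient (fS k) (x k)‖ ^ 2| ≤ η k := by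
        rw [hη k]; exact le_max_left _ _
      exact le_trans (le_abs_self _) h1
    have hd1 := hdec k
    have hpl := hPL (x k)
    have hmono : β * ‖gradient fN (x k)‖ ^ 2 - β * η k ≤ β * ‖gradient (fS k) (x k)‖ ^ 2 := by
      nlinarith [mul_le_mul_of_nonneg_left hηk hβ.le]
    have hββ' : β' * ‖gradient fN (x k)‖ ^ 2 ≤ β * ‖gradient fN (x k)‖ ^ 2 :=
      mul_le_mul_of_nonneg_right hβ'le (sq_nonneg _)
    have hgap_pl : β' * (2 * c * (fN (x k) - fN xstar)) ≤ β' * ‖gradient fN (x k)‖ ^ 2 :=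
      mul_le_mul_of_nonneg_left hpl hβ'pos.le
    have hid : ρ₀ * (fN (x k) - fN xstar)
        = (fN (x k) - fN xstar) - β' * (2 * c * (fN (x k) - fN xstar)) := by
      rw [hρ₀def]; ring
    rw [hid]
    linarith [hν1, hν0, hd1, hmono, hββ', hgap_pl]
  -- assemble the geometric bound
  set ρ1 : ℝ := max ρ₀ q with hρ1def
  have hρ1lt : ρ1 < 1 := max_lt hρ₀lt hq1
  have hρ1pos : 0 < ρ1 := lt_of_lt_of_le hρ₀pos (le_max_left _ _)
  set ρ : ℝ := (ρ1 + 1) / 2 with hρdef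
  have hρpos : 0 < ρ := by rw [hρdef]; linarith
  have hρlt1 : ρ < 1 := by rw [hρdef]; linarith
  have hρgt : ρ1 < ρ := by rw [hρdef]; linarith
  set δ : ℝ := ρ - ρ1 with hδdef
  have hδpos : 0 < δ := by rw [hδdef]; linarith
  set Q : ℝ := Me / δ + 1 with hQdef
  have hQpos : 0 < Q := by rw [hQdef]; positivity
  refine ⟨ρ, ⟨hρpos, hρlt1⟩, Q, hQpos, ?_⟩
  have hgap0 : 0 ≤ fN (x 0) - fN xstar := by linarith [hmin (x 0)]
  intro k
  induction k with
  | zero => simp; linarith [hQpos]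
  | succ k ih =>
    have h1 := hstep k
    have h2 := he k
    have hρk : 0 < ρ ^ k := pow_pos hρpos k
    have hqk : q ^ k ≤ ρ ^ k :=
      pow_le_pow_left₀ hq0.le (le_trans (le_max_right ρ₀ q) hρgt.le) k
    have hρ₀le : ρ₀ ≤ ρ1 := le_max_left _ _
    have hA : Me ≤ δ * Q := by
      have hδne : δ ≠ 0 := ne_of_gt hδpos
      have : δ * Q = Me + δ := by
        rw [hQdef]; field_simp
      linarith
    have hB : δ * Q ≤ (ρ - ρ₀) * (fN (x 0) - fN xstar + Q) := by
      apply mul_le_mul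
      · rw [hδdef]; linarith
      · linarith
      · exact hQpos.le
      · linarith
    have hC : Me * ρ ^ k ≤ (ρ - ρ₀) * (fN (x 0) - fN xstar + Q) * ρ ^ k :=
      mul_le_mul_of_nonneg_right (hA.trans hB) hρk.le
    have hD : ρ₀ * (ρ ^ k * (fN (x 0) - fN xstar + Q))
        + (ρ - ρ₀) * (fN (x 0) - fN xstar + Q) * ρ ^ k
        = ρ ^ (k + 1) * (fN (x 0) - fN xstar + Q) := by
      rw [pow_succ]; ring
    have hE : ρ₀ * (fN (x k) - fN xstar) ≤ ρ₀ * (ρ ^ k * (fN (x 0) - fN xstar + Q)) :=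
      mul_le_mul_of_nonneg_left ih hρ₀pos.le
    have hF : Me * q ^ k ≤ Me * ρ ^ k := mul_le_mul_of_nonneg_left hqk hMe.le
    linarith [h1, h2, hC, hD.le, hE, hF]
end
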